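/- arXiv:1707.00857 — 4 statements merged into one kernel-verified Lean document; each statement's English description precedes it below -/
import Mathlib

section
/- Let φ: [φ(T),T] → [φ(T),T] and ψ: [ψ(S),S] → [ψ(S),S] be two differentiable involutions with unique fixed points t₀ and s₀ respectively. Then there exists an orientation-preserving diffeomorphism f: [ψ(S),S] → [φ(T),T] such that f(ψ(s)) = φ(f(s)) for all s ∈ [ψ(S),S]. -/
open Set Filter Topology

/-- Auxiliary: given a differentiable involution `φ` on `[a,b]` with `φ b = a`, the map
`p t = t - φ t` extends to a global diffeomorphism `P` of `ℝ` with differentiable inverse. -/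
lemma involution_conj {a b : ℝ} (hab : a < b) (φ : ℝ → ℝ)
    (hinv : ∀ t ∈ Icc a b, φ (φ t) = t)
    (hdiff : DifferentiableOn ℝ φ (Icc a b))
    (hb : φ b = a) :
    ∃ P Pi : ℝ → ℝ, Differentiable ℝ P ∧ Differentiable ℝ Pi ∧
      StrictMono P ∧ StrictMono Pi ∧
      (∀ t ∈ Icc a b, P t = t - φ t) ∧
      (∀ x, Pi (P x) = x) ∧ (∀ y, P (Pi y) = y) := by
  have ha : a ∈ Icc a b := ⟨le_rfl, hab.le⟩
  have hbmem : b ∈ Icc a b := ⟨hab.le, le_rfl⟩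
  have hφa : φ a = b := by rw [← hb]; exact hinv b hbmem
  have hInj : InjOn φ (Icc a b) := fun x hx y hy h => by
    rw [← hinv x hx, ← hinv y hy, h]
  have hanti : AntitoneOn φ (Icc a b) := by
    have : StrictAntiOn φ (Icc a b) := by
      apply ContinuousOn.strictAntiOn_of_injOn_Icc hab.le _ hdiff.continuousOn hInj
      rw [hb, hφa]; exact hab.le
    exact this.antitoneOn
  set p : ℝ → ℝ := fun t => t - φ t with hp
  have hpd : DifferentiableOn ℝ p (Icc a b) := differentiableOn_id.sub hdiff
  -- every within-derivative of p on Icc a b is ≥ 1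
  have key : ∀ x ∈ Icc a b, ∀ d, HasDerivWithinAt p d (Icc a b) x → 1 ≤ d := by
    intro x hx d hd
    rw [hasDerivWithinAt_iff_tendsto_slope] at hd
    have hne : (𝓝[Icc a b \ {x}] x).NeBot := by
      rcases lt_or_ge x b with hxb | hxb
      · have h1 : x ∈ closure (Ioc x b) := by
          rw [closure_Ioc hxb.ne]; exact ⟨le_rfl, hxb.le⟩
        have h2 := mem_closure_iff_nhdsWithin_neBot.1 h1
        refine h2.mono (nhdsWithin_mono x fun y hy => ⟨⟨hx.1.trans hy.1.le, hy.2⟩, ?_⟩)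
        simp only [mem_singleton_iff]
        exact hy.1.ne' 
      · have hxb' : x = b := le_antisymm hx.2 hxb
        have h1 : x ∈ closure (Ico a x) := by
          rw [closure_Ico (hxb' ▸ hab.ne)]; exact ⟨(hxb' ▸ hab.le), le_rfl⟩
        have h2 := mem_closure_iff_nhdsWithin_neBot.1 h1
        refine h2.mono (nhdsWithin_mono x fun y hy => ⟨⟨hy.1, hy.2.le.trans hx.2⟩, ?_⟩)
        simp only [mem_singleton_iff]
        exact hy.2.ne
    refine ge_of_tendsto hd ?_
    filter_upwards [self_mem_nhdsWithin] with y hy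
    obtain ⟨hy1, hy2⟩ := hy
    have hyx : y ≠ x := by simpa using hy2
    have hne0 : y - x ≠ 0 := sub_ne_zero.2 hyx
    have hslope : slope p x y = 1 + (φ x - φ y) / (y - x) := by
      rw [slope_def_field, hp]
      field_simp
      ring
    rw [hslope]
    have : 0 ≤ (φ x - φ y) / (y - x) := by
      rw [div_nonneg_iff]
      rcases lt_or_gt_of_ne hyx with h | h
      · right
        refine ⟨?_, by linarith⟩
        have := hanti hy1 hx h.le
        linarith
      · left
        refine ⟨?_, by linarith⟩
        have := hanti hx hy1 h.le
        linarith
    linarith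
  obtain ⟨da, hda⟩ : ∃ d, HasDerivWithinAt p d (Icc a b) a :=
    ⟨_, (hpd a ha).hasDerivWithinAt⟩
  obtain ⟨db, hdb⟩ : ∃ d, HasDerivWithinAt p d (Icc a b) b :=
    ⟨_, (hpd b hbmem).hasDerivWithinAt⟩
  have hda1 : 1 ≤ da := key a ha da hda
  have hdb1 : 1 ≤ db := key b hbmem db hdb
  set P : ℝ → ℝ := fun t =>
    if t < a then p a + da * (t - a) else if t ≤ b then p t else p b + db * (t - b) with hP
  have hPIcc : ∀ t ∈ Icc a b, P t = p t := by
    intro t ht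
    simp only [hP, if_neg (not_lt.2 ht.1), if_pos ht.2]
  have hPlt : ∀ y, y < a → P y = p a + da * (y - a) := by
    intro y hy
    simp only [hP, if_pos hy]
  have hPgt : ∀ y, b < y → P y = p b + db * (y - b) := by
    intro y hy
    simp only [hP, if_neg (not_lt.2 (hab.le.trans hy.le)), if_neg (not_le.2 hy)]
  -- derivative everywhere, ≥ 1
  have hPd : ∀ x : ℝ, ∃ d, 1 ≤ d ∧ HasDerivAt P d x := by
    intro x
    have haff : ∀ c d : ℝ, ∀ y : ℝ, HasDerivAt (fun t => p c + d * (t - c)) d y := by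
      intro c d y
      have h1 : HasDerivAt (fun t : ℝ => t - c) 1 y := (hasDerivAt_id y).sub_const c
      have h2 := (h1.const_mul d).const_add (p c)
      simpa using h2
    rcases lt_trichotomy x a with hxa | hxa | hxa
    · refine ⟨da, hda1, ?_⟩
      have heq : (fun t => p a + da * (t - a)) =ᶠ[nhds x] P := by
        filter_upwards [Iio_mem_nhds hxa] with y hy
        exact (hPlt y hy).symm
      exact (haff a da x).congr_of_eventuallyEq heq.symm
    · subst hxa
      refine ⟨da, hda1, ?_⟩
      have hleft : HasDerivWithinAt P da (Iic x) x := by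
        refine ((haff x da x).hasDerivWithinAt).congr ?_ ?_
        · intro y hy
          rcases lt_or_eq_of_le (mem_Iic.1 hy) with h | h
          · exact hPlt y h
          · rw [h, hPIcc x ⟨le_rfl, hab.le⟩]
            simp
        · rw [hPIcc x ha]
          simp
      have hright : HasDerivWithinAt P da (Ici x) x := by
        have h1 : HasDerivWithinAt P da (Icc x b) x :=
          hda.congr (fun y hy => (hPIcc y hy)) (hPIcc x ha)
        refine h1.mono_of_mem_nhdsWithin ?_
        have heq2 : Icc x b = Ici x ∩ Iic b := (Ici_inter_Iic).symm
        rw [heq2]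
        exact inter_mem self_mem_nhdsWithin (mem_nhdsWithin_of_mem_nhds (Iic_mem_nhds hab))
      have := hleft.union hright
      rw [Iic_union_Ici] at this
      exact hasDerivWithinAt_univ.mp this
    · rcases lt_trichotomy x b with hxb | hxb | hxb
      · have hx : x ∈ Icc a b := ⟨hxa.le, hxb.le⟩
        have hmem : Icc a b ∈ nhds x := Icc_mem_nhds hxa hxb
        have hdiffAt : DifferentiableAt ℝ p x := (hpd x hx).differentiableAt hmem
        refine ⟨deriv p x, ?_, ?_⟩
        · exact key x hx _ (hdiffAt.hasDerivAt.hasDerivWithinAt)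
        · have heq : p =ᶠ[nhds x] P := by
            filter_upwards [hmem] with y hy
            exact (hPIcc y hy).symm
          exact hdiffAt.hasDerivAt.congr_of_eventuallyEq heq.symm
      · subst hxb
        refine ⟨db, hdb1, ?_⟩
        have hright : HasDerivWithinAt P db (Ici x) x := by
          refine ((haff x db x).hasDerivWithinAt).congr ?_ ?_
          · intro y hy
            rcases lt_or_eq_of_le (mem_Ici.1 hy) with h | h
            · exact hPgt y h
            · rw [← h, hPIcc x hbmem]
              simp
          · rw [hPIcc x hbmem]
            simp
        have hleft : HasDerivWithinAt P db (Iic x) x := by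
          have h1 : HasDerivWithinAt P db (Icc a x) x :=
            hdb.congr (fun y hy => (hPIcc y hy)) (hPIcc x hbmem)
          refine h1.mono_of_mem_nhdsWithin ?_
          have heq2 : Icc a x = Iic x ∩ Ici a := by rw [inter_comm, Ici_inter_Iic]
          rw [heq2]
          exact inter_mem self_mem_nhdsWithin (mem_nhdsWithin_of_mem_nhds (Ici_mem_nhds hab))
        have := hleft.union hright
        rw [Iic_union_Ici] at this
        exact hasDerivWithinAt_univ.mp this
      · refine ⟨db, hdb1, ?_⟩
        have heq : (fun t => p b + db * (t - b)) =ᶠ[nhds x] P := by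
          filter_upwards [Ioi_mem_nhds hxb] with y hy
          exact (hPgt y hy).symm
        exact (haff b db x).congr_of_eventuallyEq heq.symm
  have hPdiff : Differentiable ℝ P := fun x => (hPd x).choose_spec.2.differentiableAt
  have hPmono : StrictMono P := by
    apply strictMono_of_deriv_pos
    intro x
    obtain ⟨d, hd1, hd⟩ := hPd x
    rw [hd.deriv]; linarith
  -- surjectivity
  have hsurj : Function.Surjective P := by
    have hcont : Continuous P := hPdiff.continuous
    have htop : Tendsto P atTop atTop := by
      have h0 : Tendsto (fun t : ℝ => t - b) atTop atTop := by
        simpa [sub_eq_add_neg] using tendsto_atTop_add_const_right atTop (-b) tendsto_id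
      have h1 : Tendsto (fun t => p b + db * (t - b)) atTop atTop :=
        tendsto_atTop_add_const_left atTop (p b) (h0.const_mul_atTop (by linarith))
      apply h1.congr'
      filter_upwards [Ioi_mem_atTop b] with y hy
      exact (hPgt y hy).symm
    have hbot : Tendsto P atBot atBot := by
      have h0 : Tendsto (fun t : ℝ => t - a) atBot atBot := by
        simpa [sub_eq_add_neg] using tendsto_atBot_add_const_right atBot (-a) tendsto_id
      have h1 : Tendsto (fun t => p a + da * (t - a)) atBot atBot :=
        tendsto_atBot_add_const_left atBot (p a) (h0.const_mul_atBot (by linarith))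
      apply h1.congr'
      filter_upwards [Iio_mem_atBot a] with y hy
      exact (hPlt y hy).symm
    exact hcont.surjective htop hbot
  set e := StrictMono.orderIsoOfSurjective P hPmono hsurj with he
  have hcoe : ∀ x, e x = P x := fun x => rfl
  have hleft : ∀ x, e.symm (P x) = x := by
    intro x; rw [← hcoe]; exact e.symm_apply_apply x
  have hright : ∀ y, P (e.symm y) = y := by
    intro y; rw [← hcoe]; exact e.apply_symm_apply y
  have hPidiff : Differentiable ℝ (⇑e.symm : ℝ → ℝ) := by
    intro y
    obtain ⟨d, hd1, hd⟩ := hPd (e.symm y)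
    exact (HasDerivAt.of_local_left_inverse e.symm.continuous.continuousAt hd (by linarith)
      (Filter.Eventually.of_forall fun z => hright z)).differentiableAt
  exact ⟨P, ⇑e.symm, hPdiff, hPidiff, hPmono, e.symm.strictMono, hPIcc, hleft, hright⟩

/-- Correspondence of involutions: given two differentiable involutions φ on [φ(T),T] and
ψ on [ψ(S),S] with unique fixed points t₀ and s₀, there is an orientation-preserving
diffeomorphism f of [ψ(S),S] onto [φ(T),T] with f ∘ ψ = φ ∘ f. -/
theorem stmt0 (T S t₀ s₀ : ℝ) (φ ψ : ℝ → ℝ)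
    (hT : φ T < T) (hS : ψ S < S)
    (hφmap : MapsTo φ (Icc (φ T) T) (Icc (φ T) T))
    (hψmap : MapsTo ψ (Icc (ψ S) S) (Icc (ψ S) S))
    (hφinv : ∀ t ∈ Icc (φ T) T, φ (φ t) = t)
    (hψinv : ∀ s ∈ Icc (ψ S) S, ψ (ψ s) = s)
    (hφdiff : DifferentiableOn ℝ φ (Icc (φ T) T))
    (hψdiff : DifferentiableOn ℝ ψ (Icc (ψ S) S))
    (hφne : ∃ t ∈ Icc (φ T) T, φ t ≠ t)
    (hψne : ∃ s ∈ Icc (ψ S) S, ψ s ≠ s)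
    (ht₀ : t₀ ∈ Icc (φ T) T ∧ φ t₀ = t₀ ∧ ∀ t ∈ Icc (φ T) T, φ t = t → t = t₀)
    (hs₀ : s₀ ∈ Icc (ψ S) S ∧ ψ s₀ = s₀ ∧ ∀ s ∈ Icc (ψ S) S, ψ s = s → s = s₀) :
    ∃ f g : ℝ → ℝ,
      DifferentiableOn ℝ f (Icc (ψ S) S) ∧
      DifferentiableOn ℝ g (Icc (φ T) T) ∧
      BijOn f (Icc (ψ S) S) (Icc (φ T) T) ∧
      (∀ s ∈ Icc (ψ S) S, g (f s) = s) ∧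
      (∀ t ∈ Icc (φ T) T, f (g t) = t) ∧
      StrictMonoOn f (Icc (ψ S) S) ∧
      ∀ s ∈ Icc (ψ S) S, f (ψ s) = φ (f s) := by
  obtain ⟨P, Pi, hPdiff, hPidiff, hPmono, hPimono, hPeq, hPl, hPr⟩ :=
    involution_conj hT φ hφinv hφdiff rfl
  obtain ⟨Q, Qi, hQdiff, hQidiff, hQmono, hQimono, hQeq, hQl, hQr⟩ :=
    involution_conj hS ψ hψinv hψdiff rfl
  have hTa : φ T ∈ Icc (φ T) T := ⟨le_rfl, hT.le⟩
  have hTb : T ∈ Icc (φ T) T := ⟨hT.le, le_rfl⟩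
  have hSa : ψ S ∈ Icc (ψ S) S := ⟨le_rfl, hS.le⟩
  have hSb : S ∈ Icc (ψ S) S := ⟨hS.le, le_rfl⟩
  set c : ℝ := (T - φ T) / (S - ψ S) with hc
  have hSne : S - ψ S ≠ 0 := by linarith
  have hTne : T - φ T ≠ 0 := by linarith
  have hcpos : 0 < c := div_pos (by linarith) (by linarith)
  have hcS : c * (S - ψ S) = T - φ T := div_mul_cancel₀ _ hSne
  have hciT : c⁻¹ * (T - φ T) = S - ψ S := by
    rw [hc, inv_div]
    exact div_mul_cancel₀ _ hTne
  have hQa : Q (ψ S) = ψ S - S := by rw [hQeq (ψ S) hSa, hψinv S hSb]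
  have hQb : Q S = S - ψ S := hQeq S hSb
  have hPa : P (φ T) = φ T - T := by rw [hPeq (φ T) hTa, hφinv T hTb]
  have hPb : P T = T - φ T := hPeq T hTb
  set f : ℝ → ℝ := fun s => Pi (c * Q s) with hf
  set g : ℝ → ℝ := fun t => Qi (c⁻¹ * P t) with hg
  have hgf : ∀ s, g (f s) = s := by
    intro s
    rw [hg, hf]
    simp only
    rw [hPr, inv_mul_cancel_left₀ hcpos.ne', hQl]
  have hfg : ∀ t, f (g t) = t := by
    intro t
    rw [hf, hg]
    simp only
    rw [hQr, mul_inv_cancel_left₀ hcpos.ne', hPl]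
  have hfmono : StrictMono f := by
    intro x y h
    exact hPimono (mul_lt_mul_of_pos_left (hQmono h) hcpos)
  have hfmaps : MapsTo f (Icc (ψ S) S) (Icc (φ T) T) := by
    intro s hs
    have h1 : P (φ T) ≤ c * Q s := by
      have := mul_le_mul_of_nonneg_left (hQmono.monotone hs.1) hcpos.le
      rw [hQa] at this
      have h2 : c * (ψ S - S) = φ T - T := by
        have h3 : ψ S - S = -(S - ψ S) := by ring
        rw [h3, mul_neg, hcS]; ring
      rw [hPa, ← h2]; exact this
    have h2 : c * Q s ≤ P T := by
      have := mul_le_mul_of_nonneg_left (hQmono.monotone hs.2) hcpos.le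
      rw [hQb, hcS, ← hPb] at this
      exact this
    constructor
    · have := hPimono.monotone h1
      rwa [hPl] at this
    · have := hPimono.monotone h2
      rwa [hPl] at this
  have hgmaps : MapsTo g (Icc (φ T) T) (Icc (ψ S) S) := by
    intro t ht
    have hcipos : 0 < c⁻¹ := inv_pos.2 hcpos
    have h1 : Q (ψ S) ≤ c⁻¹ * P t := by
      have := mul_le_mul_of_nonneg_left (hPmono.monotone ht.1) hcipos.le
      rw [hPa] at this
      have h2 : c⁻¹ * (φ T - T) = ψ S - S := by
        have h3 : φ T - T = -(T - φ T) := by ring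
        rw [h3, mul_neg, hciT]; ring
      rw [hQa, ← h2]; exact this
    have h2 : c⁻¹ * P t ≤ Q S := by
      have := mul_le_mul_of_nonneg_left (hPmono.monotone ht.2) hcipos.le
      rw [hPb, hciT, ← hQb] at this
      exact this
    constructor
    · have := hQimono.monotone h1
      rwa [hQl] at this
    · have := hQimono.monotone h2
      rwa [hQl] at this
  refine ⟨f, g, ?_, ?_, ?_, fun s _ => hgf s, fun t _ => hfg t,
    hfmono.strictMonoOn _, ?_⟩
  · exact (hPidiff.comp (hQdiff.const_mul c)).differentiableOn
  · exact (hQidiff.comp (hPdiff.const_mul c⁻¹)).differentiableOn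
  · exact ⟨hfmaps, (hfmono.strictMonoOn _).injOn, fun t ht => ⟨g t, hgmaps ht, hfg t⟩⟩
  · intro s hs
    have hfs : f s ∈ Icc (φ T) T := hfmaps hs
    have h1 : P (f s) = c * Q s := hPr _
    have h1' : P (f s) = f s - φ (f s) := hPeq _ hfs
    have h2 : P (φ (f s)) = -(c * Q s) := by
      rw [hPeq _ (hφmap hfs), hφinv _ hfs]
      linarith
    have h3 : P (f (ψ s)) = -(c * Q s) := by
      rw [hf]
      simp only
      rw [hPr, hQeq _ (hψmap hs), hψinv s hs, hQeq s hs]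
      ring
    exact hPmono.injective (h3.trans h2.symm)
end

section
/- Let φ be a differentiable involution on an interval with unique fixed point t₀. Then φ'(t₀) = -1. -/
open Set

/-- The derivative of a differentiable involution at its fixed point equals -1. -/
theorem stmt1 (J : Set ℝ) (hJ : J.OrdConnected) (φ : ℝ → ℝ) (t₀ d : ℝ)
    (hmap : MapsTo φ J J) (hinv : ∀ t ∈ J, φ (φ t) = t)
    (hne : ∃ t ∈ J, φ t ≠ t) (hcont : ContinuousOn φ J)
    (ht₀ : t₀ ∈ interior J) (hfix : φ t₀ = t₀)
    (hd : HasDerivAt φ d t₀) : d = -1 := by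
  have ht₀J : t₀ ∈ J := interior_subset ht₀
  -- Step 1: d * d = 1 via the chain rule on φ ∘ φ = id near t₀.
  have hcomp : HasDerivAt (φ ∘ φ) (d * d) t₀ := by
    have h1 : HasDerivAt φ d (φ t₀) := by rw [hfix]; exact hd
    exact h1.comp t₀ hd
  have heq : (φ ∘ φ) =ᶠ[nhds t₀] id := by
    filter_upwards [isOpen_interior.mem_nhds ht₀] with x hx
    exact hinv x (interior_subset hx)
  have hid : HasDerivAt id (d * d) t₀ := hcomp.congr_of_eventuallyEq heq.symm
  have hdd : d * d = 1 := hid.unique (hasDerivAt_id t₀)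
  -- Step 2: φ is strictly antitone on a nondegenerate interval containing t₀, its
  -- endpoints and their images.
  obtain ⟨u, huJ, hu⟩ := hne
  have hφuJ : φ u ∈ J := hmap huJ
  set a : ℝ := min t₀ (min u (φ u)) with ha
  set b : ℝ := max t₀ (max u (φ u)) with hb
  have haJ : a ∈ J := by
    rcases min_cases t₀ (min u (φ u)) with ⟨h, _⟩ | ⟨h, _⟩ <;> rw [ha, h]
    · exact ht₀J
    · rcases min_cases u (φ u) with ⟨h', _⟩ | ⟨h', _⟩ <;> rw [h'] <;> assumption
  have hbJ : b ∈ J := by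
    rcases max_cases t₀ (max u (φ u)) with ⟨h, _⟩ | ⟨h, _⟩ <;> rw [hb, h]
    · exact ht₀J
    · rcases max_cases u (φ u) with ⟨h', _⟩ | ⟨h', _⟩ <;> rw [h'] <;> assumption
  have hsub : Icc a b ⊆ J := hJ.out haJ hbJ
  have ht₀I : t₀ ∈ Icc a b := ⟨min_le_left _ _, le_max_left _ _⟩
  have huI : u ∈ Icc a b :=
    ⟨le_trans (min_le_right _ _) (min_le_left _ _),
     le_trans (le_max_left _ _) (le_max_right _ _)⟩
  have hφuI : φ u ∈ Icc a b :=
    ⟨le_trans (min_le_right _ _) (min_le_right _ _),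
     le_trans (le_max_right _ _) (le_max_right _ _)⟩
  have hut₀ : u ≠ t₀ := fun h => hu (by rw [h, hfix])
  have hab : a < b := by
    rcases lt_or_gt_of_ne hut₀ with h | h
    · exact lt_of_le_of_lt huI.1 (lt_of_lt_of_le h ht₀I.2)
    · exact lt_of_le_of_lt ht₀I.1 (lt_of_lt_of_le h huI.2)
  have hinj : InjOn φ (Icc a b) := fun x hx y hy h => by
    rw [← hinv x (hsub hx), h, hinv y (hsub hy)]
  have hanti : StrictAntiOn φ (Icc a b) := by
    rcases ContinuousOn.strictMonoOn_of_injOn_Icc' hab.le (hcont.mono hsub) hinj with h | h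
    · exfalso
      rcases lt_or_gt_of_ne hu with hlt | hlt
      · have : φ (φ u) < φ u := h hφuI huI hlt
        rw [hinv u huJ] at this; exact absurd this (not_lt.2 hlt.le)
      · have : φ u < φ (φ u) := h huI hφuI hlt
        rw [hinv u huJ] at this; exact absurd this (not_lt.2 hlt.le)
    · exact h
  -- Step 3: d ≤ 0 since slopes within Icc a b are nonpositive.
  have hslope : Filter.Tendsto (slope φ t₀) (nhdsWithin t₀ {t₀}ᶜ) (nhds d) :=
    hasDerivAt_iff_tendsto_slope.mp hd
  have hsub' : Icc a b \ {t₀} ⊆ {t₀}ᶜ := fun x hx => hx.2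
  have hcl : t₀ ∈ closure (Icc a b \ {t₀}) := by
    rcases lt_or_ge t₀ b with h | h
    · have h1 : Ioc t₀ b ⊆ Icc a b \ {t₀} := fun x hx =>
        ⟨⟨le_trans ht₀I.1 hx.1.le, hx.2⟩, ne_of_gt hx.1⟩
      exact closure_mono h1 (by rw [closure_Ioc h.ne]; exact ⟨le_refl _, h.le⟩)
    · have h2 : a < t₀ := lt_of_lt_of_le hab (le_antisymm ht₀I.2 h ▸ le_refl t₀)
      have h1 : Ico a t₀ ⊆ Icc a b \ {t₀} := fun x hx =>
        ⟨⟨hx.1, le_trans hx.2.le ht₀I.2⟩, ne_of_lt hx.2⟩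
      exact closure_mono h1 (by rw [closure_Ico h2.ne]; exact ⟨h2.le, le_refl _⟩)
  haveI : (nhdsWithin t₀ (Icc a b \ {t₀})).NeBot := mem_closure_iff_nhdsWithin_neBot.mp hcl
  have htend : Filter.Tendsto (slope φ t₀) (nhdsWithin t₀ (Icc a b \ {t₀})) (nhds d) :=
    hslope.mono_left (nhdsWithin_mono _ hsub')
  have hd0 : d ≤ 0 := by
    refine le_of_tendsto htend (Filter.eventually_of_mem self_mem_nhdsWithin ?_)
    rintro x ⟨hxI, hxne⟩
    have hxne' : x ≠ t₀ := hxne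
    rw [slope_def_field]
    rcases lt_or_gt_of_ne hxne' with h | h
    · have : φ t₀ < φ x := hanti hxI ht₀I h
      exact div_nonpos_of_nonneg_of_nonpos (by linarith) (by linarith)
    · have : φ x < φ t₀ := hanti ht₀I hxI h
      exact div_nonpos_of_nonpos_of_nonneg (by linarith) (by linarith)
  nlinarith [hdd, hd0]
end

section
/- Suppose a, b ∈ ℝ satisfy a² - b² ≠ (nπ/T)² for all nonnegative integers n, and h ∈ L¹([-T,T]). Then the problem x'(t) + a·x(-t) + b·x(t) = h(t), x(-T) = x(T), has a unique solution given by u(t) = ∫₋ₜᵀ Ḡ(t,s) h(s) ds, where Ḡ(t,s) := a·G(t,-s) - b·G(t,s) + ∂G/∂t(t,s) and G is the Green's function of x'' + (a²-b²)x = 0 with periodic conditions x(T)=x(-T), x'(T)=x'(-T). -/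
open Set MeasureTheory intervalIntegral Filter
namespace S8

noncomputable def Cc (m t : ℝ) : ℝ :=
  if 0 < m then Real.cos (Real.sqrt m * t) else Real.cosh (Real.sqrt (-m) * t)

noncomputable def Ss (m t : ℝ) : ℝ :=
  if 0 < m then Real.sin (Real.sqrt m * t) / Real.sqrt m
  else Real.sinh (Real.sqrt (-m) * t) / Real.sqrt (-m)

variable {m : ℝ}

lemma sq_sqrt_pos (hm : 0 < m) : Real.sqrt m * Real.sqrt m = m := Real.mul_self_sqrt hm.le

lemma hasDerivAt_Cc (hm : m ≠ 0) (t : ℝ) : HasDerivAt (Cc m) (-m * Ss m t) t := by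
  rcases lt_or_gt_of_ne hm with hneg | hpos
  · have h1 : 0 < -m := by linarith
    have hs : Real.sqrt (-m) * Real.sqrt (-m) = -m := Real.mul_self_sqrt h1.le
    have hs0 : Real.sqrt (-m) ≠ 0 := by positivity
    have : HasDerivAt (fun t => Real.cosh (Real.sqrt (-m) * t))
        (Real.sinh (Real.sqrt (-m) * t) * Real.sqrt (-m)) t := by
      simpa [Function.comp_def] using (Real.hasDerivAt_cosh (Real.sqrt (-m) * t)).comp t
        ((hasDerivAt_id t).const_mul (Real.sqrt (-m)))
    have heq : ∀ u, Cc m u = Real.cosh (Real.sqrt (-m) * u) := by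
      intro u; simp [Cc, not_lt.mpr hneg.le, hneg.not_gt]
    rw [show Cc m = fun u => Real.cosh (Real.sqrt (-m) * u) from funext heq]
    convert this using 1
    have : Ss m t = Real.sinh (Real.sqrt (-m) * t) / Real.sqrt (-m) := by
      simp [Ss, hneg.not_gt]
    rw [this]; field_simp; rw [Real.sq_sqrt h1.le]; ring
  · have hs : Real.sqrt m * Real.sqrt m = m := Real.mul_self_sqrt hpos.le
    have hs0 : Real.sqrt m ≠ 0 := by positivity
    have : HasDerivAt (fun t => Real.cos (Real.sqrt m * t))
        (-Real.sin (Real.sqrt m * t) * Real.sqrt m) t := by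
      simpa [Function.comp_def] using (Real.hasDerivAt_cos (Real.sqrt m * t)).comp t
        ((hasDerivAt_id t).const_mul (Real.sqrt m))
    have heq : ∀ u, Cc m u = Real.cos (Real.sqrt m * u) := by
      intro u; simp [Cc, hpos]
    rw [show Cc m = fun u => Real.cos (Real.sqrt m * u) from funext heq]
    convert this using 1
    have : Ss m t = Real.sin (Real.sqrt m * t) / Real.sqrt m := by simp [Ss, hpos]
    rw [this]; field_simp; rw [Real.sq_sqrt hpos.le]

lemma hasDerivAt_Ss (hm : m ≠ 0) (t : ℝ) : HasDerivAt (Ss m) (Cc m t) t := by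
  rcases lt_or_gt_of_ne hm with hneg | hpos
  · have h1 : 0 < -m := by linarith
    have hs0 : Real.sqrt (-m) ≠ 0 := by positivity
    have : HasDerivAt (fun t => Real.sinh (Real.sqrt (-m) * t) / Real.sqrt (-m))
        (Real.cosh (Real.sqrt (-m) * t) * Real.sqrt (-m) / Real.sqrt (-m)) t := by
      simpa using (((Real.hasDerivAt_sinh (Real.sqrt (-m) * t)).comp t
        ((hasDerivAt_id t).const_mul (Real.sqrt (-m)))).div_const (Real.sqrt (-m)))
    have heq : ∀ u, Ss m u = Real.sinh (Real.sqrt (-m) * u) / Real.sqrt (-m) := by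
      intro u; simp [Ss, hneg.not_gt]
    rw [show Ss m = fun u => Real.sinh (Real.sqrt (-m) * u) / Real.sqrt (-m) from funext heq]
    convert this using 1
    have : Cc m t = Real.cosh (Real.sqrt (-m) * t) := by simp [Cc, hneg.not_gt]
    rw [this]; field_simp
  · have hs0 : Real.sqrt m ≠ 0 := by positivity
    have : HasDerivAt (fun t => Real.sin (Real.sqrt m * t) / Real.sqrt m)
        (Real.cos (Real.sqrt m * t) * Real.sqrt m / Real.sqrt m) t := by
      simpa using (((Real.hasDerivAt_sin (Real.sqrt m * t)).comp t
        ((hasDerivAt_id t).const_mul (Real.sqrt m))).div_const (Real.sqrt m))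
    have heq : ∀ u, Ss m u = Real.sin (Real.sqrt m * u) / Real.sqrt m := by
      intro u; simp [Ss, hpos]
    rw [show Ss m = fun u => Real.sin (Real.sqrt m * u) / Real.sqrt m from funext heq]
    convert this using 1
    have : Cc m t = Real.cos (Real.sqrt m * t) := by simp [Cc, hpos]
    rw [this]; field_simp

@[simp] lemma Cc_zero : Cc m 0 = 1 := by by_cases h : 0 < m <;> simp [Cc, h]

@[simp] lemma Ss_zero : Ss m 0 = 0 := by by_cases h : 0 < m <;> simp [Ss, h]

lemma Cc_even (t : ℝ) : Cc m (-t) = Cc m t := by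
  by_cases h : 0 < m <;> simp [Cc, h, mul_comm]

lemma Ss_odd (t : ℝ) : Ss m (-t) = -Ss m t := by
  by_cases h : 0 < m <;> simp [Ss, h, neg_div]

lemma Cc_sq_add (hm : m ≠ 0) (t : ℝ) : Cc m t ^ 2 + m * Ss m t ^ 2 = 1 := by
  rcases lt_or_gt_of_ne hm with hneg | hpos
  · have h1 : 0 < -m := by linarith
    have hs : Real.sqrt (-m) * Real.sqrt (-m) = -m := Real.mul_self_sqrt h1.le
    have hs0 : Real.sqrt (-m) ≠ 0 := by positivity
    have hc := Real.cosh_sq_sub_sinh_sq (Real.sqrt (-m) * t)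
    simp only [Cc, Ss, hneg.not_gt, if_false]
    field_simp
    nlinarith [hc, hs]
  · have hs : Real.sqrt m * Real.sqrt m = m := Real.mul_self_sqrt hpos.le
    have hs0 : Real.sqrt m ≠ 0 := by positivity
    have hc := Real.sin_sq_add_cos_sq (Real.sqrt m * t)
    simp only [Cc, Ss, hpos, if_true]
    field_simp
    rw [Real.sq_sqrt hpos.le]; linear_combination m * hc


lemma continuous_Cc (hm : m ≠ 0) : Continuous (Cc m) := by
  apply continuous_iff_continuousAt.mpr
  exact fun t => (hasDerivAt_Cc hm t).continuousAt

lemma continuous_Ss (hm : m ≠ 0) : Continuous (Ss m) := by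
  apply continuous_iff_continuousAt.mpr
  exact fun t => (hasDerivAt_Ss hm t).continuousAt


/-- Constancy of a function with zero derivative on `uIcc`. -/
lemma const_of_deriv_zero {W : ℝ → ℝ} {x₀ t : ℝ}
    (h : ∀ u ∈ uIcc x₀ t, HasDerivAt W 0 u) : W t = W x₀ := by
  have := intervalIntegral.integral_eq_sub_of_hasDerivAt h
    (_root_.intervalIntegrable_const (c := (0:ℝ)))
  simp at this
  linarith [this]

/-- Any solution of `y'' = -m y` on an interval is a combination of `Cc` and `Ss`. -/
lemma solution_eq (hm : m ≠ 0) {f fd : ℝ → ℝ} {x₀ t : ℝ}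
    (hf : ∀ u ∈ uIcc x₀ t, HasDerivAt f (fd u) u)
    (hfd : ∀ u ∈ uIcc x₀ t, HasDerivAt fd (-m * f u) u) :
    f t = f x₀ * Cc m (t - x₀) + fd x₀ * Ss m (t - x₀) := by
  set g : ℝ → ℝ := fun u => f u - (f x₀ * Cc m (u - x₀) + fd x₀ * Ss m (u - x₀)) with hg
  set gd : ℝ → ℝ := fun u => fd u - (-m * f x₀ * Ss m (u - x₀) + fd x₀ * Cc m (u - x₀)) with hgd
  have hCc : ∀ u : ℝ, HasDerivAt (fun v => Cc m (v - x₀)) (-m * Ss m (u - x₀)) u := by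
    intro u
    simpa [Function.comp_def] using (hasDerivAt_Cc hm (u - x₀)).comp u ((hasDerivAt_id u).sub_const x₀)
  have hSs : ∀ u : ℝ, HasDerivAt (fun v => Ss m (v - x₀)) (Cc m (u - x₀)) u := by
    intro u
    simpa [Function.comp_def] using (hasDerivAt_Ss hm (u - x₀)).comp u ((hasDerivAt_id u).sub_const x₀)
  have hgderiv : ∀ u ∈ uIcc x₀ t, HasDerivAt g (gd u) u := by
    intro u hu
    have := (hf u hu).sub ((((hCc u).const_mul (f x₀))).add ((hSs u).const_mul (fd x₀)))
    refine this.congr_deriv ?_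
    simp [hgd]; ring
  have hgdderiv : ∀ u ∈ uIcc x₀ t, HasDerivAt gd (-m * g u) u := by
    intro u hu
    have := (hfd u hu).sub ((((hSs u).const_mul (-m * f x₀))).add ((hCc u).const_mul (fd x₀)))
    refine this.congr_deriv ?_
    simp [hg]; ring
  have hg0 : g x₀ = 0 := by simp [hg]
  have hgd0 : gd x₀ = 0 := by simp [hgd]
  -- two conserved quantities
  have hW1 : ∀ u ∈ uIcc x₀ t, HasDerivAt
      (fun v => gd v * Ss m (v - x₀) - g v * Cc m (v - x₀)) 0 u := by
    intro u hu
    have := ((hgdderiv u hu).mul (hSs u)).sub ((hgderiv u hu).mul (hCc u))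
    refine this.congr_deriv ?_
    ring
  have hW2 : ∀ u ∈ uIcc x₀ t, HasDerivAt
      (fun v => gd v * Cc m (v - x₀) + m * (g v * Ss m (v - x₀))) 0 u := by
    intro u hu
    have := ((hgdderiv u hu).mul (hCc u)).add (((hgderiv u hu).mul (hSs u)).const_mul m)
    refine this.congr_deriv ?_
    ring
  have e1 := const_of_deriv_zero hW1
  have e2 := const_of_deriv_zero hW2
  simp [hg0, hgd0] at e1 e2
  -- e1 : gd t * Ss m (t - x₀) - g t * Cc m (t - x₀) = 0 (roughly)
  have hpyth := Cc_sq_add hm (t - x₀)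
  have hgt : g t = 0 := by
    linear_combination (-(g t)) * hpyth - Cc m (t - x₀) * e1 + Ss m (t - x₀) * e2
  have : f t - (f x₀ * Cc m (t - x₀) + fd x₀ * Ss m (t - x₀)) = 0 := hgt
  linarith [this]

/-- Nonresonance: periodic solutions of `y'' = -m y` vanish. -/
lemma nonres {T : ℝ} (hm : m ≠ 0) (hSsT : Ss m T ≠ 0) {f fd : ℝ → ℝ}
    (hf : ∀ u : ℝ, HasDerivAt f (fd u) u)
    (hfd : ∀ u : ℝ, HasDerivAt fd (-m * f u) u)
    (h1 : f T = f (-T)) (h2 : fd T = fd (-T)) : ∀ t, f t = 0 := by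
  have hrep : ∀ t : ℝ, f t = f 0 * Cc m t + fd 0 * Ss m t := by
    intro t
    have := solution_eq hm (x₀ := 0) (t := t) (fun u _ => hf u) (fun u _ => hfd u)
    simpa using this
  have hrepd : ∀ t : ℝ, fd t = -m * f 0 * Ss m t + fd 0 * Cc m t := by
    intro t
    have h1 : HasDerivAt f (fd t) t := hf t
    have h2 : HasDerivAt (fun u => f 0 * Cc m u + fd 0 * Ss m u)
        (f 0 * (-m * Ss m t) + fd 0 * Cc m t) t :=
      ((hasDerivAt_Cc hm t).const_mul (f 0)).add ((hasDerivAt_Ss hm t).const_mul (fd 0))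
    have heq : f = fun u => f 0 * Cc m u + fd 0 * Ss m u := funext hrep
    rw [heq] at h1
    have := h1.unique h2
    rw [this]; ring
  have hb1 := h1
  rw [hrep T, hrep (-T), Cc_even, Ss_odd] at hb1
  have hfd0 : fd 0 = 0 := by
    have hSs : fd 0 * Ss m T = 0 := by linarith
    rcases mul_eq_zero.mp hSs with h | h
    · exact h
    · exact absurd h hSsT
  have hb2 := h2
  rw [hrepd T, hrepd (-T), Cc_even, Ss_odd] at hb2
  have hf0 : f 0 = 0 := by
    have hSs : m * f 0 * Ss m T = 0 := by linarith
    rcases mul_eq_zero.mp hSs with h | h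
    · rcases mul_eq_zero.mp h with h' | h'
      · exact absurd h' hm
      · exact h'
    · exact absurd h hSsT
  intro t
  rw [hrep t, hf0, hfd0]; ring


/-! ### The explicit kernel -/

noncomputable def psi (T m x : ℝ) : ℝ := Cc m (x - T) / (2 * m * Ss m T)

noncomputable def psid (T m x : ℝ) : ℝ := -Ss m (x - T) / (2 * Ss m T)

/-- The derivative (in the first variable) of `fun t => psi T m |t - s|`, off `t = s`. -/
noncomputable def Wf (T m x : ℝ) : ℝ := if 0 ≤ x then psid T m x else -psid T m (-x)

section PsiFacts

variable {T m : ℝ}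

lemma hasDerivAt_psi (hm : m ≠ 0) (x : ℝ) : HasDerivAt (psi T m) (psid T m x) x := by
  have h1 : HasDerivAt (fun u : ℝ => Cc m (u - T)) (-m * Ss m (x - T)) x := by
    simpa [Function.comp_def] using (hasDerivAt_Cc hm (x - T)).comp x ((hasDerivAt_id x).sub_const T)
  have h2 := h1.div_const (2 * m * Ss m T)
  have hval : -m * Ss m (x - T) / (2 * m * Ss m T) = psid T m x := by
    unfold psid
    rw [show -m * Ss m (x - T) = m * -Ss m (x - T) by ring,
      show 2 * m * Ss m T = m * (2 * Ss m T) by ring, mul_div_mul_left _ _ hm]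
  rw [hval] at h2
  exact h2

lemma hasDerivAt_psid (hm : m ≠ 0) (x : ℝ) : HasDerivAt (psid T m) (-m * psi T m x) x := by
  have h1 : HasDerivAt (fun u : ℝ => -Ss m (u - T)) (-Cc m (x - T)) x := by
    simpa [Function.comp_def, Pi.neg_def] using ((hasDerivAt_Ss hm (x - T)).comp x ((hasDerivAt_id x).sub_const T)).neg
  have h2 := h1.div_const (2 * Ss m T)
  have hval : -Cc m (x - T) / (2 * Ss m T) = -m * psi T m x := by
    unfold psi
    rw [show -m * (Cc m (x - T) / (2 * m * Ss m T))
        = (m * -Cc m (x - T)) / (m * (2 * Ss m T)) by ring, mul_div_mul_left _ _ hm]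
  rw [hval] at h2
  exact h2

lemma continuous_psi (hm : m ≠ 0) : Continuous (psi T m) :=
  continuous_iff_continuousAt.mpr fun x => (hasDerivAt_psi hm x).continuousAt

lemma continuous_psid (hm : m ≠ 0) : Continuous (psid T m) :=
  continuous_iff_continuousAt.mpr fun x => (hasDerivAt_psid hm x).continuousAt

lemma psid_zero (hSsT : Ss m T ≠ 0) : psid T m 0 = 1/2 := by
  unfold psid
  rw [zero_sub, Ss_odd]
  field_simp

lemma psi_symm (x : ℝ) : psi T m (T + x) = psi T m (T - x) := by
  unfold psi
  rw [show T + x - T = x by ring, show T - x - T = -x by ring, Cc_even]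

lemma psid_symm (x : ℝ) : psid T m (T + x) = -psid T m (T - x) := by
  unfold psid
  rw [show T + x - T = x by ring, show T - x - T = -x by ring, Ss_odd]
  ring

lemma Wf_nonneg {x : ℝ} (hx : 0 ≤ x) : Wf T m x = psid T m x := if_pos hx

lemma Wf_neg {x : ℝ} (hx : x < 0) : Wf T m x = -psid T m (-x) := if_neg (not_le.mpr hx)

lemma Wf_measurable (hm : m ≠ 0) : Measurable (Wf T m) := by
  unfold Wf
  exact Measurable.ite measurableSet_Ici
    ((continuous_psid hm).measurable)
    (((continuous_psid hm).measurable.comp measurable_neg).neg)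

lemma Wf_abs_le (x : ℝ) : |Wf T m x| ≤ |psid T m x| + |psid T m (-x)| := by
  unfold Wf
  split_ifs with h
  · have := abs_nonneg (psid T m (-x)); linarith [le_refl |psid T m x|]
  · rw [abs_neg]; have := abs_nonneg (psid T m x); linarith [le_refl |psid T m (-x)|]

/-- derivative of `t ↦ psi |t - s|` off the diagonal -/
lemma hasDerivAt_psi_abs (hm : m ≠ 0) {t s : ℝ} (hts : t ≠ s) :
    HasDerivAt (fun u => psi T m |u - s|) (Wf T m (t - s)) t := by
  rcases lt_or_gt_of_ne hts with hlt | hgt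
  · -- t < s : near t, |u - s| = s - u
    have hev : (fun u => psi T m (s - u)) =ᶠ[nhds t] (fun u => psi T m |u - s|) := by
      filter_upwards [Iio_mem_nhds hlt] with u hu
      rw [abs_of_neg (by simp at hu ⊢; linarith : u - s < 0)]
      ring_nf
    have h1 : HasDerivAt (fun u => psi T m (s - u)) (-psid T m (s - t)) t := by
      have h2 : HasDerivAt (fun u : ℝ => psi T m (s - u)) (psid T m (s - t) * -1) t :=
        (hasDerivAt_psi hm (s - t)).comp t ((hasDerivAt_id t).const_sub s)
      simpa using h2
    have := h1.congr_of_eventuallyEq hev.symm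
    rwa [Wf_neg (by linarith), neg_sub]
  · have hev : (fun u => psi T m (u - s)) =ᶠ[nhds t] (fun u => psi T m |u - s|) := by
      filter_upwards [Ioi_mem_nhds hgt] with u hu
      rw [abs_of_pos (by simp at hu ⊢; linarith : 0 < u - s)]
    have h1 : HasDerivAt (fun u => psi T m (u - s)) (psid T m (t - s)) t := by
      simpa [Function.comp_def] using (hasDerivAt_psi hm (t - s)).comp t ((hasDerivAt_id t).sub_const s)
    have := h1.congr_of_eventuallyEq hev.symm
    rwa [Wf_nonneg (by linarith)]

lemma hasDerivAt_Wf_abs (hm : m ≠ 0) {t s : ℝ} (hts : t ≠ s) :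
    HasDerivAt (fun u => Wf T m (u - s)) (-m * psi T m |t - s|) t := by
  rcases lt_or_gt_of_ne hts with hlt | hgt
  · have hev : (fun u => -psid T m (s - u)) =ᶠ[nhds t] (fun u => Wf T m (u - s)) := by
      filter_upwards [Iio_mem_nhds hlt] with u hu
      rw [Wf_neg (by simp at hu ⊢; linarith : u - s < 0), neg_sub]
    have h1 : HasDerivAt (fun u => -psid T m (s - u)) (-m * psi T m (s - t)) t := by
      have h2 : HasDerivAt (fun u : ℝ => psid T m (s - u)) (-m * psi T m (s - t) * -1) t :=
        (hasDerivAt_psid hm (s - t)).comp t ((hasDerivAt_id t).const_sub s)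
      simpa [Function.comp_def, Pi.neg_def] using h2.neg
    have := h1.congr_of_eventuallyEq hev.symm
    rwa [abs_of_neg (by linarith : t - s < 0), neg_sub]
  · have hev : (fun u => psid T m (u - s)) =ᶠ[nhds t] (fun u => Wf T m (u - s)) := by
      filter_upwards [Ioi_mem_nhds hgt] with u hu
      rw [Wf_nonneg (by simp at hu ⊢; linarith : 0 ≤ u - s)]
    have h1 : HasDerivAt (fun u => psid T m (u - s)) (-m * psi T m (t - s)) t := by
      simpa [Function.comp_def] using (hasDerivAt_psid hm (t - s)).comp t ((hasDerivAt_id t).sub_const s)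
    have := h1.congr_of_eventuallyEq hev.symm
    rwa [abs_of_pos (by linarith : 0 < t - s)]

lemma continuous_psi_abs_pair (hm : m ≠ 0) :
    Continuous (fun z : ℝ × ℝ => psi T m |z.1 - z.2|) :=
  (continuous_psi hm).comp ((continuous_fst.sub continuous_snd).abs)

end PsiFacts


/-! ### Part I: the hypotheses pin down the Green's function -/

section KeyOne

variable {T m : ℝ} {G Gt : ℝ → ℝ → ℝ}

lemma key1 (hT : 0 < T) (hm : m ≠ 0) (hSsT : Ss m T ≠ 0)
    (hGcont : ContinuousOn (fun z : ℝ × ℝ => G z.1 z.2) (Icc (-T) T ×ˢ Icc (-T) T))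
    (hGt : ∀ s ∈ Icc (-T) T, ∀ t ∈ Icc (-T) T, t ≠ s →
      HasDerivAt (fun u => G u s) (Gt t s) t)
    (hGtt : ∀ s ∈ Icc (-T) T, ∀ t ∈ Icc (-T) T, t ≠ s →
      HasDerivAt (fun u => Gt u s) (-m * G t s) t)
    (hbc1 : ∀ s ∈ Icc (-T) T, G T s = G (-T) s)
    (hbc2 : ∀ s ∈ Ioo (-T) T, Gt T s = Gt (-T) s)
    {s : ℝ} (hs : s ∈ Ioo (-T) T) :
    ∃ c : ℝ, ∀ t ∈ Icc (-T) T, G t s = c * psi T m |t - s| := by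
  obtain ⟨hs1, hs2⟩ := hs
  have hsIcc : s ∈ Icc (-T) T := ⟨hs1.le, hs2.le⟩
  set f : ℝ → ℝ := fun u => G u s - psi T m |u - s| with hf
  set fd : ℝ → ℝ := fun u => Gt u s - Wf T m (u - s) with hfd
  have hfderiv : ∀ u ∈ Icc (-T) T, u ≠ s → HasDerivAt f (fd u) u := fun u hu hus =>
    (hGt s hsIcc u hu hus).sub (hasDerivAt_psi_abs hm hus)
  have hfdderiv : ∀ u ∈ Icc (-T) T, u ≠ s → HasDerivAt fd (-m * f u) u := by
    intro u hu hus
    have h2 : HasDerivAt fd (-m * G u s - -m * psi T m |u - s|) u :=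
      (hGtt s hsIcc u hu hus).sub (hasDerivAt_Wf_abs (T := T) hm hus)
    convert h2 using 1
    simp only [hf]; ring
  have hfc : ContinuousOn f (Icc (-T) T) := by
    apply ContinuousOn.sub
    · exact hGcont.comp (continuous_id.prodMk continuous_const).continuousOn
        (fun u hu => ⟨hu, hsIcc⟩)
    · exact ((continuous_psi hm).comp ((continuous_id.sub continuous_const).abs)).continuousOn
  -- left branch representation
  have hL : ∀ t ∈ Ico (-T) s, f t = f (-T) * Cc m (t + T) + fd (-T) * Ss m (t + T) := by
    intro t ht
    have huIcc : uIcc (-T) t = Icc (-T) t := uIcc_of_le ht.1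
    have hsub : ∀ u ∈ uIcc (-T) t, u ∈ Icc (-T) T ∧ u ≠ s := by
      intro u hu
      rw [huIcc] at hu
      exact ⟨⟨hu.1, by linarith [hu.2, ht.2]⟩, by linarith [hu.2, ht.2]⟩
    have := solution_eq hm (x₀ := -T) (t := t)
      (fun u hu => hfderiv u (hsub u hu).1 (hsub u hu).2)
      (fun u hu => hfdderiv u (hsub u hu).1 (hsub u hu).2)
    simpa [sub_neg_eq_add] using this
  -- right branch representation
  have hR : ∀ t ∈ Ioc s T, f t = f T * Cc m (t - T) + fd T * Ss m (t - T) := by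
    intro t ht
    have huIcc : uIcc T t = Icc t T := uIcc_of_ge ht.2
    have hsub : ∀ u ∈ uIcc T t, u ∈ Icc (-T) T ∧ u ≠ s := by
      intro u hu
      rw [huIcc] at hu
      exact ⟨⟨by linarith [hu.1, ht.1], hu.2⟩, by have := ht.1; intro h; rw [h] at hu; linarith [hu.1]⟩
    exact solution_eq hm (x₀ := T) (t := t)
      (fun u hu => hfderiv u (hsub u hu).1 (hsub u hu).2)
      (fun u hu => hfdderiv u (hsub u hu).1 (hsub u hu).2)
  -- continuity extensions to t = s
  have hcontL : Continuous (fun t : ℝ => f (-T) * Cc m (t + T) + fd (-T) * Ss m (t + T)) := by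
    exact (continuous_const.mul ((continuous_Cc hm).comp (continuous_id.add continuous_const))).add
      (continuous_const.mul ((continuous_Ss hm).comp (continuous_id.add continuous_const)))
  have hcontR : Continuous (fun t : ℝ => f T * Cc m (t - T) + fd T * Ss m (t - T)) := by
    exact (continuous_const.mul ((continuous_Cc hm).comp (continuous_id.sub continuous_const))).add
      (continuous_const.mul ((continuous_Ss hm).comp (continuous_id.sub continuous_const)))
  have hLs : f s = f (-T) * Cc m (s + T) + fd (-T) * Ss m (s + T) := by
    have hne : (nhdsWithin s (Ico (-T) s)).NeBot := by
      rw [← mem_closure_iff_nhdsWithin_neBot, closure_Ico (by linarith : (-T) ≠ s)]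
      exact ⟨hs1.le, le_refl s⟩
    have h1 : Tendsto f (nhdsWithin s (Ico (-T) s)) (nhds (f s)) :=
      (hfc.continuousWithinAt hsIcc).mono_left
        (nhdsWithin_mono s (fun x hx => ⟨hx.1, by linarith [hx.2]⟩))
    have h2 : Tendsto (fun t => f (-T) * Cc m (t + T) + fd (-T) * Ss m (t + T))
        (nhdsWithin s (Ico (-T) s))
        (nhds (f (-T) * Cc m (s + T) + fd (-T) * Ss m (s + T))) :=
      (hcontL.tendsto s).mono_left nhdsWithin_le_nhds
    have h3 : Tendsto f (nhdsWithin s (Ico (-T) s))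
        (nhds (f (-T) * Cc m (s + T) + fd (-T) * Ss m (s + T))) := by
      refine h2.congr' ?_
      filter_upwards [self_mem_nhdsWithin] with t ht
      exact (hL t ht).symm
    exact tendsto_nhds_unique h1 h3
  have hRs : f s = f T * Cc m (s - T) + fd T * Ss m (s - T) := by
    have hne : (nhdsWithin s (Ioc s T)).NeBot := by
      rw [← mem_closure_iff_nhdsWithin_neBot, closure_Ioc (by linarith : s ≠ T)]
      exact ⟨le_refl s, hs2.le⟩
    have h1 : Tendsto f (nhdsWithin s (Ioc s T)) (nhds (f s)) :=
      (hfc.continuousWithinAt hsIcc).mono_left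
        (nhdsWithin_mono s (fun x hx => ⟨by linarith [hx.1], hx.2⟩))
    have h2 : Tendsto (fun t => f T * Cc m (t - T) + fd T * Ss m (t - T))
        (nhdsWithin s (Ioc s T))
        (nhds (f T * Cc m (s - T) + fd T * Ss m (s - T))) :=
      (hcontR.tendsto s).mono_left nhdsWithin_le_nhds
    have h3 : Tendsto f (nhdsWithin s (Ioc s T))
        (nhds (f T * Cc m (s - T) + fd T * Ss m (s - T))) := by
      refine h2.congr' ?_
      filter_upwards [self_mem_nhdsWithin] with t ht
      exact (hR t ht).symm
    exact tendsto_nhds_unique h1 h3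
  -- the jump, the matched global solution and its explicit derivative
  set Δ : ℝ := (-m * f T * Ss m (s - T) + fd T * Cc m (s - T)) -
      (-m * f (-T) * Ss m (s + T) + fd (-T) * Cc m (s + T)) with hΔ
  set Y : ℝ → ℝ := fun u => f (-T) * Cc m (u + T) + fd (-T) * Ss m (u + T)
      - Δ * psi T m (s - u) with hY
  set Yd : ℝ → ℝ := fun u => -m * f (-T) * Ss m (u + T) + fd (-T) * Cc m (u + T)
      + Δ * psid T m (s - u) with hYd
  set Y2 : ℝ → ℝ := fun u => f T * Cc m (u - T) + fd T * Ss m (u - T)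
      - Δ * psi T m (u - s) with hY2
  set Y2d : ℝ → ℝ := fun u => -m * f T * Ss m (u - T) + fd T * Cc m (u - T)
      - Δ * psid T m (u - s) with hY2d
  have hYderiv : ∀ u : ℝ, HasDerivAt Y (Yd u) u := by
    intro u
    have h1 : HasDerivAt (fun v : ℝ => Cc m (v + T)) (-m * Ss m (u + T)) u := by
      simpa [Function.comp_def] using (hasDerivAt_Cc hm (u + T)).comp u ((hasDerivAt_id u).add_const T)
    have h2 : HasDerivAt (fun v : ℝ => Ss m (v + T)) (Cc m (u + T)) u := by
      simpa [Function.comp_def] using (hasDerivAt_Ss hm (u + T)).comp u ((hasDerivAt_id u).add_const T)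
    have h3 : HasDerivAt (fun v : ℝ => psi T m (s - v)) (psid T m (s - u) * -1) u :=
      (hasDerivAt_psi hm (s - u)).comp u ((hasDerivAt_id u).const_sub s)
    have := ((h1.const_mul (f (-T))).add (h2.const_mul (fd (-T)))).sub (h3.const_mul Δ)
    refine this.congr_deriv ?_
    simp only [hYd]; ring
  have hY2deriv : ∀ u : ℝ, HasDerivAt Y2 (Y2d u) u := by
    intro u
    have h1 : HasDerivAt (fun v : ℝ => Cc m (v - T)) (-m * Ss m (u - T)) u := by
      simpa [Function.comp_def] using (hasDerivAt_Cc hm (u - T)).comp u ((hasDerivAt_id u).sub_const T)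
    have h2 : HasDerivAt (fun v : ℝ => Ss m (v - T)) (Cc m (u - T)) u := by
      simpa [Function.comp_def] using (hasDerivAt_Ss hm (u - T)).comp u ((hasDerivAt_id u).sub_const T)
    have h3 : HasDerivAt (fun v : ℝ => psi T m (v - s)) (psid T m (u - s)) u := by
      simpa [Function.comp_def] using (hasDerivAt_psi hm (u - s)).comp u ((hasDerivAt_id u).sub_const s)
    have := ((h1.const_mul (f T)).add (h2.const_mul (fd T))).sub (h3.const_mul Δ)
    refine this.congr_deriv ?_
    simp only [hY2d]; ring
  have hYdderiv : ∀ u : ℝ, HasDerivAt Yd (-m * Y u) u := by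
    intro u
    have h1 : HasDerivAt (fun v : ℝ => Ss m (v + T)) (Cc m (u + T)) u := by
      simpa [Function.comp_def] using (hasDerivAt_Ss hm (u + T)).comp u ((hasDerivAt_id u).add_const T)
    have h2 : HasDerivAt (fun v : ℝ => Cc m (v + T)) (-m * Ss m (u + T)) u := by
      simpa [Function.comp_def] using (hasDerivAt_Cc hm (u + T)).comp u ((hasDerivAt_id u).add_const T)
    have h3 : HasDerivAt (fun v : ℝ => psid T m (s - v)) (-m * psi T m (s - u) * -1) u :=
      (hasDerivAt_psid hm (s - u)).comp u ((hasDerivAt_id u).const_sub s)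
    have := ((h1.const_mul (-m * f (-T))).add (h2.const_mul (fd (-T)))).add (h3.const_mul Δ)
    refine this.congr_deriv ?_
    simp only [hY]; ring
  have hY2dderiv : ∀ u : ℝ, HasDerivAt Y2d (-m * Y2 u) u := by
    intro u
    have h1 : HasDerivAt (fun v : ℝ => Ss m (v - T)) (Cc m (u - T)) u := by
      simpa [Function.comp_def] using (hasDerivAt_Ss hm (u - T)).comp u ((hasDerivAt_id u).sub_const T)
    have h2 : HasDerivAt (fun v : ℝ => Cc m (v - T)) (-m * Ss m (u - T)) u := by
      simpa [Function.comp_def] using (hasDerivAt_Cc hm (u - T)).comp u ((hasDerivAt_id u).sub_const T)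
    have h3 : HasDerivAt (fun v : ℝ => psid T m (v - s)) (-m * psi T m (u - s)) u := by
      simpa [Function.comp_def] using (hasDerivAt_psid hm (u - s)).comp u ((hasDerivAt_id u).sub_const s)
    have := ((h1.const_mul (-m * f T)).add (h2.const_mul (fd T))).sub (h3.const_mul Δ)
    refine this.congr_deriv ?_
    simp only [hY2]; ring
  -- Y = Y2 everywhere
  have hYY2 : ∀ u : ℝ, Y u = Y2 u := by
    have hsq : Y s = Y2 s := by
      simp only [hY, hY2, sub_self]
      rw [← hLs, ← hRs]
    have hdq : Yd s = Y2d s := by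
      simp only [hYd, hY2d, sub_self]
      rw [psid_zero hSsT, hΔ]; ring
    intro u
    have hdiff : ∀ v : ℝ, HasDerivAt (fun w => Y w - Y2 w) (Yd v - Y2d v) v :=
      fun v => (hYderiv v).sub (hY2deriv v)
    have hdiff2 : ∀ v : ℝ, HasDerivAt (fun w => Yd w - Y2d w) (-m * (Y v - Y2 v)) v := by
      intro v
      have := (hYdderiv v).sub (hY2dderiv v)
      refine this.congr_deriv ?_; ring
    have := solution_eq hm (x₀ := s) (t := u) (fun v _ => hdiff v) (fun v _ => hdiff2 v)
    rw [hsq, hdq] at this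
    simp at this
    linarith [this]
  -- periodicity of Y
  have habs1 : |T - s| = T - s := abs_of_pos (by linarith)
  have habs2 : |(-T) - s| = T + s := by rw [abs_of_neg (by linarith : (-T) - s < 0)]; ring
  have hfT : f T = G T s - psi T m (T - s) := by simp only [hf, habs1]
  have hfmT : f (-T) = G (-T) s - psi T m (T + s) := by simp only [hf, habs2]
  have hpsisym : psi T m (T - s) = psi T m (T + s) := (psi_symm s).symm
  have hYper : Y T = Y (-T) := by
    have h1 : Y T = f T - Δ * psi T m (T - s) := by
      rw [hYY2 T]; simp only [hY2, sub_self, Cc_zero, Ss_zero]; ring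
    have h2 : Y (-T) = f (-T) - Δ * psi T m (s + T) := by
      simp only [hY, neg_add_cancel, Cc_zero, Ss_zero]; ring
    rw [h1, h2, hfT, hfmT, hbc1 s hsIcc, hpsisym, show s + T = T + s by ring]
  -- derivative periodicity
  have hfdT : fd T = Gt T s - psid T m (T - s) := by
    simp only [hfd, Wf_nonneg (by linarith : (0:ℝ) ≤ T - s)]
  have hfdmT : fd (-T) = Gt (-T) s + psid T m (T + s) := by
    have : Wf T m ((-T) - s) = -psid T m (T + s) := by
      rw [Wf_neg (by linarith : (-T) - s < 0)]; ring_nf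
    simp only [hfd, this]; ring
  have hpsidsym : psid T m (T + s) = -psid T m (T - s) := psid_symm s
  have hYdT : Yd T = Y2d T := by
    have h1 : HasDerivAt Y (Yd T) T := hYderiv T
    have h2 : HasDerivAt Y2 (Y2d T) T := hY2deriv T
    rw [show Y = Y2 from funext hYY2] at h1
    exact h1.unique h2
  have hYdper : Yd T = Yd (-T) := by
    have h1 : Yd T = fd T - Δ * psid T m (T - s) := by
      rw [hYdT]; simp only [hY2d, sub_self, Cc_zero, Ss_zero]; ring
    have h2 : Yd (-T) = fd (-T) + Δ * psid T m (s + T) := by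
      simp only [hYd, neg_add_cancel, Cc_zero, Ss_zero]; ring
    rw [h1, h2, hfdT, hfdmT, hbc2 s ⟨hs1, hs2⟩, show s + T = T + s by ring, hpsidsym]
    ring
  -- nonresonance kills Y
  have hY0 : ∀ u, Y u = 0 := nonres hm hSsT hYderiv hYdderiv hYper hYdper
  -- conclusion
  refine ⟨1 + Δ, fun t ht => ?_⟩
  rcases le_or_gt t s with hts | hst
  · have habs : |t - s| = s - t := by rw [abs_of_nonpos (by linarith)]; ring
    have hft : f t = Δ * psi T m (s - t) := by
      rcases eq_or_lt_of_le hts with heq | hlt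
      · rw [heq]
        have := hY0 s
        simp only [hY, sub_self] at this
        rw [hLs]
        have : f (-T) * Cc m (s + T) + fd (-T) * Ss m (s + T) = Δ * psi T m 0 := by linarith
        rw [this]; norm_num
      · have h1 := hL t ⟨ht.1, hlt⟩
        have h2 := hY0 t
        simp only [hY] at h2
        rw [h1]; linarith
    have : G t s - psi T m |t - s| = Δ * psi T m (s - t) := hft
    rw [habs] at this ⊢
    linarith
  · have habs : |t - s| = t - s := abs_of_pos (by linarith)
    have hft : f t = Δ * psi T m (t - s) := by
      have h1 := hR t ⟨hst, ht.2⟩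
      have h2 := hY0 t
      rw [hYY2 t] at h2
      simp only [hY2] at h2
      rw [h1]; linarith
    have : G t s - psi T m |t - s| = Δ * psi T m (t - s) := hft
    rw [habs] at this ⊢
    linarith

end KeyOne


section KeyTwo

variable {T m : ℝ} {G Gt : ℝ → ℝ → ℝ} {p q : ℝ → ℝ}

lemma exists_psi_ne (hm : m ≠ 0) (hSsT : Ss m T ≠ 0) {ε : ℝ} (hε : 0 < ε) :
    ∃ x₀ : ℝ, 0 ≤ x₀ ∧ x₀ < ε ∧ psi T m x₀ ≠ 0 := by
  by_cases h0 : psi T m 0 ≠ 0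
  · exact ⟨0, le_refl 0, hε, h0⟩
  · push_neg at h0
    have hslope : Tendsto (slope (psi T m) 0) (nhdsWithin 0 {(0:ℝ)}ᶜ) (nhds (psid T m 0)) :=
      hasDerivAt_iff_tendsto_slope.mp (hasDerivAt_psi hm 0)
    have hslope2 : Tendsto (slope (psi T m) 0) (nhdsWithin 0 (Ioo 0 ε)) (nhds (psid T m 0)) :=
      hslope.mono_left (nhdsWithin_mono 0 (fun x hx => ne_of_gt hx.1))
    have hne : (nhdsWithin (0:ℝ) (Ioo 0 ε)).NeBot := by
      rw [← mem_closure_iff_nhdsWithin_neBot, closure_Ioo (ne_of_lt hε)]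
      exact ⟨le_refl 0, hε.le⟩
    have hev : ∀ᶠ x in nhdsWithin (0:ℝ) (Ioo 0 ε), slope (psi T m) 0 x ≠ 0 := by
      have h12 : psid T m 0 = 1/2 := psid_zero hSsT
      rw [h12] at hslope2
      have := hslope2.eventually_ne (by norm_num : (1:ℝ)/2 ≠ 0)
      exact this
    have hev2 : ∀ᶠ x in nhdsWithin (0:ℝ) (Ioo 0 ε), x ∈ Ioo (0:ℝ) ε :=
      self_mem_nhdsWithin
    obtain ⟨x₀, hx1, hx2⟩ := (hev.and hev2).exists
    refine ⟨x₀, hx2.1.le, hx2.2, ?_⟩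
    intro hpsi0
    apply hx1
    rw [slope_def_field, hpsi0, h0]
    simp


lemma key2 (hT : 0 < T) (hm : m ≠ 0) (hSsT : Ss m T ≠ 0)
    (hGcont : ContinuousOn (fun z : ℝ × ℝ => G z.1 z.2) (Icc (-T) T ×ˢ Icc (-T) T))
    (hGt : ∀ s ∈ Icc (-T) T, ∀ t ∈ Icc (-T) T, t ≠ s →
      HasDerivAt (fun u => G u s) (Gt t s) t)
    (hGtt : ∀ s ∈ Icc (-T) T, ∀ t ∈ Icc (-T) T, t ≠ s →
      HasDerivAt (fun u => Gt u s) (-m * G t s) t)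
    (hjump : ∀ t ∈ Ioo (-T) T,
      Tendsto (fun s => Gt t s) (nhdsWithin t (Iio t)) (nhds (p t)) ∧
      Tendsto (fun s => Gt t s) (nhdsWithin t (Ioi t)) (nhds (q t)) ∧
      p t - q t = 1)
    (hbc1 : ∀ s ∈ Icc (-T) T, G T s = G (-T) s)
    (hbc2 : ∀ s ∈ Ioo (-T) T, Gt T s = Gt (-T) s) :
    ∀ s ∈ Ioo (-T) T, ∀ t ∈ Icc (-T) T, G t s = psi T m |t - s| := by
  have hkey : ∀ s ∈ Ioo (-T) T, ∃ c : ℝ, ∀ t ∈ Icc (-T) T, G t s = c * psi T m |t - s| :=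
    fun s hs => key1 hT hm hSsT hGcont hGt hGtt hbc1 hbc2 hs
  choose! cf hcf using hkey
  -- it suffices to show cf = 1 on Ioo
  suffices hcf1 : ∀ t ∈ Ioo (-T) T, cf t = 1 by
    intro s hs t ht
    rw [hcf s hs t ht, hcf1 s hs, one_mul]
  intro t ht
  obtain ⟨ht1, ht2⟩ := ht
  have htIcc : t ∈ Icc (-T) T := ⟨ht1.le, ht2.le⟩
  obtain ⟨x₀, hx0, hx1, hxne⟩ := exists_psi_ne (T := T) hm hSsT (by linarith : (0:ℝ) < T - t)
  have htx : t + x₀ ∈ Icc (-T) T := ⟨by linarith, by linarith⟩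
  -- derivative transfer in the interior
  have hGtval : ∀ s' ∈ Ioo (-T) T, s' ≠ t → Gt t s' = cf s' * Wf T m (t - s') := by
    intro s' hs' hne
    have h1 : HasDerivAt (fun u => G u s') (Gt t s') t :=
      hGt s' ⟨hs'.1.le, hs'.2.le⟩ t htIcc (Ne.symm hne)
    have h2 : HasDerivAt (fun u => cf s' * psi T m |u - s'|) (cf s' * Wf T m (t - s')) t :=
      (hasDerivAt_psi_abs hm (Ne.symm hne)).const_mul (cf s')
    have hev : (fun u => G u s') =ᶠ[nhds t] (fun u => cf s' * psi T m |u - s'|) := by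
      filter_upwards [Ioo_mem_nhds ht1 ht2] with u hu
      exact hcf s' hs' u ⟨hu.1.le, hu.2.le⟩
    exact h1.unique (h2.congr_of_eventuallyEq hev)
  have hIooev : Ioo (-T) T ∈ nhds t := Ioo_mem_nhds ht1 ht2
  -- left limit: cf s' → 2 * p t
  have hWleft : Tendsto (fun s' => Wf T m (t - s')) (nhdsWithin t (Iio t)) (nhds (1/2)) := by
    have hcont : Tendsto (fun s' => psid T m (t - s')) (nhdsWithin t (Iio t)) (nhds (psid T m 0)) := by
      have : Continuous (fun s' : ℝ => psid T m (t - s')) :=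
        (continuous_psid hm).comp (continuous_const.sub continuous_id)
      have h0 := this.tendsto t
      simp only [sub_self] at h0
      exact h0.mono_left nhdsWithin_le_nhds
    rw [psid_zero hSsT] at hcont
    refine hcont.congr' ?_
    filter_upwards [self_mem_nhdsWithin] with s' hs'
    rw [Wf_nonneg (by simp at hs'; linarith : (0:ℝ) ≤ t - s')]
  have hcfleft : Tendsto cf (nhdsWithin t (Iio t)) (nhds (2 * p t)) := by
    have hGtlim := (hjump t ⟨ht1, ht2⟩).1
    have hdiv : Tendsto (fun s' => Gt t s' / Wf T m (t - s')) (nhdsWithin t (Iio t))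
        (nhds (p t / (1/2))) := hGtlim.div hWleft (by norm_num)
    have : p t / (1/2) = 2 * p t := by ring
    rw [this] at hdiv
    refine hdiv.congr' ?_
    have hWne : ∀ᶠ s' in nhdsWithin t (Iio t), Wf T m (t - s') ≠ 0 :=
      hWleft.eventually_ne (by norm_num)
    filter_upwards [self_mem_nhdsWithin, nhdsWithin_le_nhds hIooev, hWne] with s' h1 h2 h3
    rw [hGtval s' h2 (ne_of_lt h1), mul_div_assoc, div_self h3, mul_one]
  -- right limit: cf s' → -2 * q t
  have hWright : Tendsto (fun s' => Wf T m (t - s')) (nhdsWithin t (Ioi t)) (nhds (-(1/2))) := by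
    have hcont : Tendsto (fun s' => -psid T m (s' - t)) (nhdsWithin t (Ioi t))
        (nhds (-psid T m 0)) := by
      have : Continuous (fun s' : ℝ => -psid T m (s' - t)) :=
        ((continuous_psid hm).comp (continuous_id.sub continuous_const)).neg
      have h0 := this.tendsto t
      simp only [sub_self] at h0
      exact h0.mono_left nhdsWithin_le_nhds
    rw [psid_zero hSsT] at hcont
    refine hcont.congr' ?_
    filter_upwards [self_mem_nhdsWithin] with s' hs'
    rw [Wf_neg (by simp at hs'; linarith : t - s' < 0), neg_sub]
  have hcfright : Tendsto cf (nhdsWithin t (Ioi t)) (nhds (-2 * q t)) := by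
    have hGtlim := (hjump t ⟨ht1, ht2⟩).2.1
    have hdiv : Tendsto (fun s' => Gt t s' / Wf T m (t - s')) (nhdsWithin t (Ioi t))
        (nhds (q t / (-(1/2)))) := hGtlim.div hWright (by norm_num)
    have : q t / (-(1/2)) = -2 * q t := by ring
    rw [this] at hdiv
    refine hdiv.congr' ?_
    have hWne : ∀ᶠ s' in nhdsWithin t (Ioi t), Wf T m (t - s') ≠ 0 :=
      hWright.eventually_ne (by norm_num)
    filter_upwards [self_mem_nhdsWithin, nhdsWithin_le_nhds hIooev, hWne] with s' h1 h2 h3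
    rw [hGtval s' h2 (ne_of_gt h1), mul_div_assoc, div_self h3, mul_one]
  -- the continuity path through (t + x₀, t)
  have habsx : |t + x₀ - t| = x₀ := by rw [show t + x₀ - t = x₀ by ring, abs_of_nonneg hx0]
  have hvalx : G (t + x₀) t = cf t * psi T m x₀ := by
    have := hcf t ⟨ht1, ht2⟩ (t + x₀) htx
    rwa [habsx] at this
  have hpath : ∀ (l : Filter ℝ), l.NeBot → l ≤ nhdsWithin t (Ioo (-T) T) →
      Tendsto cf l (nhds (cf t)) := by
    intro l hl hll
    have hlnhds : l ≤ nhds t := hll.trans nhdsWithin_le_nhds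
    have ev1 : ∀ᶠ s' in l, s' ∈ Ioo (-T) T := hll self_mem_nhdsWithin
    have ev2 : ∀ᶠ s' in l, s' < T - x₀ := hlnhds (Iio_mem_nhds (by linarith : t < T - x₀))
    have hmem : Tendsto (fun s' => ((s' + x₀ : ℝ), s')) l
        (nhdsWithin ((t + x₀, t) : ℝ × ℝ) (Icc (-T) T ×ˢ Icc (-T) T)) := by
      rw [tendsto_nhdsWithin_iff]
      constructor
      · have h1 : Tendsto (fun s' => ((s' + x₀ : ℝ), s')) (nhds t)
            (nhds ((t + x₀, t) : ℝ × ℝ)) :=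
          ((continuous_id.add continuous_const).prodMk continuous_id).tendsto t
        exact h1.comp hlnhds
      · filter_upwards [ev1, ev2] with s' hs' hs2
        refine ⟨⟨?_, ?_⟩, ⟨hs'.1.le, hs'.2.le⟩⟩
        · show -T ≤ s' + x₀
          linarith [hs'.1]
        · show s' + x₀ ≤ T
          linarith
    have hGpath : Tendsto (fun s' => G (s' + x₀) s') l (nhds (G (t + x₀) t)) :=
      (hGcont.continuousWithinAt ⟨htx, htIcc⟩).tendsto.comp hmem
    have heq : ∀ᶠ s' in l, G (s' + x₀) s' = cf s' * psi T m x₀ := by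
      filter_upwards [ev1, ev2] with s' hs' hs2
      have habs : |s' + x₀ - s'| = x₀ := by
        rw [show s' + x₀ - s' = x₀ by ring, abs_of_nonneg hx0]
      have := hcf s' hs' (s' + x₀) ⟨by linarith [hs'.1, hx0], by linarith⟩
      rwa [habs] at this
    have hmul : Tendsto (fun s' => cf s' * psi T m x₀) l (nhds (G (t + x₀) t)) :=
      hGpath.congr' (heq.mono fun s' h => h)
    have hdiv := hmul.div_const (psi T m x₀)
    rw [hvalx, mul_div_cancel_right₀ _ hxne] at hdiv
    refine hdiv.congr' ?_
    filter_upwards with s'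
    rw [mul_div_cancel_right₀ _ hxne]
  -- combine
  have hneL : (nhdsWithin t (Ioo (-T) t)).NeBot := by
    rw [← mem_closure_iff_nhdsWithin_neBot, closure_Ioo (ne_of_lt ht1)]
    exact ⟨ht1.le, le_refl t⟩
  have hneR : (nhdsWithin t (Ioo t T)).NeBot := by
    rw [← mem_closure_iff_nhdsWithin_neBot, closure_Ioo (ne_of_lt ht2)]
    exact ⟨le_refl t, ht2.le⟩
  have hLmono1 : nhdsWithin t (Ioo (-T) t) ≤ nhdsWithin t (Iio t) :=
    nhdsWithin_mono t (fun x hx => hx.2)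
  have hLmono2 : nhdsWithin t (Ioo (-T) t) ≤ nhdsWithin t (Ioo (-T) T) :=
    nhdsWithin_mono t (fun x hx => ⟨hx.1, by linarith [hx.2]⟩)
  have hRmono1 : nhdsWithin t (Ioo t T) ≤ nhdsWithin t (Ioi t) :=
    nhdsWithin_mono t (fun x hx => hx.1)
  have hRmono2 : nhdsWithin t (Ioo t T) ≤ nhdsWithin t (Ioo (-T) T) :=
    nhdsWithin_mono t (fun x hx => ⟨by linarith [hx.1], hx.2⟩)
  have e1 : cf t = 2 * p t :=
    tendsto_nhds_unique (hpath _ hneL hLmono2) (hcfleft.mono_left hLmono1)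
  have e2 : cf t = -2 * q t :=
    tendsto_nhds_unique (hpath _ hneR hRmono2) (hcfright.mono_left hRmono1)
  have e3 := (hjump t ⟨ht1, ht2⟩).2.2
  linarith


lemma keyGt (hT : 0 < T) (hm : m ≠ 0)
    (hGt : ∀ s ∈ Icc (-T) T, ∀ t ∈ Icc (-T) T, t ≠ s →
      HasDerivAt (fun u => G u s) (Gt t s) t)
    (hGpsi : ∀ s ∈ Ioo (-T) T, ∀ t ∈ Icc (-T) T, G t s = psi T m |t - s|)
    {s t : ℝ} (hs : s ∈ Ioo (-T) T) (ht : t ∈ Icc (-T) T) (hts : t ≠ s) :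
    Gt t s = Wf T m (t - s) := by
  have hsIcc : s ∈ Icc (-T) T := ⟨hs.1.le, hs.2.le⟩
  have h1 : HasDerivWithinAt (fun u => G u s) (Gt t s) (Icc (-T) T) t :=
    (hGt s hsIcc t ht hts).hasDerivWithinAt
  have h2 : HasDerivWithinAt (fun u => psi T m |u - s|) (Wf T m (t - s)) (Icc (-T) T) t :=
    (hasDerivAt_psi_abs hm hts).hasDerivWithinAt
  have h2' : HasDerivWithinAt (fun u => G u s) (Wf T m (t - s)) (Icc (-T) T) t :=
    h2.congr (fun u hu => hGpsi s hs u hu) (hGpsi s hs t ht)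
  have hud : UniqueDiffWithinAt ℝ (Icc (-T) T) t :=
    uniqueDiffOn_Icc (by linarith : -T < T) t ht
  rw [← h1.derivWithin hud, ← h2'.derivWithin hud]


end KeyTwo

/-! ### FTC with finitely many exceptional points -/

section FTC

variable {F dF : ℝ → ℝ}

lemma ftc0 {x y : ℝ} (hcont : Continuous F)
    (hderiv : ∀ σ ∈ Ioo (min x y) (max x y), HasDerivAt F (dF σ) σ)
    (hint : IntervalIntegrable dF volume x y) :
    ∫ σ in x..y, dF σ = F y - F x :=
  intervalIntegral.integral_eq_sub_of_hasDeriv_right hcont.continuousOn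
    (fun σ hσ => (hderiv σ hσ).hasDerivWithinAt) hint

lemma ftc1 {x y c : ℝ} (hxy : x ≤ y) (hcont : Continuous F)
    (hderiv : ∀ σ ∈ Ioo x y, σ ≠ c → HasDerivAt F (dF σ) σ)
    (hint : ∀ u v : ℝ, IntervalIntegrable dF volume u v) :
    ∫ σ in x..y, dF σ = F y - F x := by
  set c' : ℝ := max x (min c y) with hc'
  have hxc' : x ≤ c' := le_max_left _ _
  have hc'y : c' ≤ y := max_le hxy (min_le_right _ _)
  rw [← intervalIntegral.integral_add_adjacent_intervals (hint x c') (hint c' y)]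
  have h1 : ∫ σ in x..c', dF σ = F c' - F x := by
    apply ftc0 hcont _ (hint x c')
    intro σ hσ
    rw [min_eq_left hxc', max_eq_right hxc'] at hσ
    refine hderiv σ ⟨hσ.1, lt_of_lt_of_le hσ.2 hc'y⟩ ?_
    intro hEq
    rw [hEq] at hσ
    rcases lt_max_iff.mp hσ.2 with h | h
    · exact absurd hσ.1 (not_lt.mpr h.le)
    · exact absurd h (not_lt.mpr (min_le_left _ _))
  have h2 : ∫ σ in c'..y, dF σ = F y - F c' := by
    apply ftc0 hcont _ (hint c' y)
    intro σ hσ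
    rw [min_eq_left hc'y, max_eq_right hc'y] at hσ
    refine hderiv σ ⟨lt_of_le_of_lt hxc' hσ.1, hσ.2⟩ ?_
    intro hEq
    rw [hEq] at hσ
    have h1' : max x (min c y) < c := hσ.1
    rw [min_eq_left hσ.2.le] at h1'
    exact absurd h1' (not_lt.mpr (le_max_right _ _))
  rw [h1, h2]; ring

lemma ftc2 {x y c d : ℝ} (hxy : x ≤ y) (hcont : Continuous F)
    (hderiv : ∀ σ ∈ Ioo x y, σ ≠ c → σ ≠ d → HasDerivAt F (dF σ) σ)
    (hint : ∀ u v : ℝ, IntervalIntegrable dF volume u v) :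
    ∫ σ in x..y, dF σ = F y - F x := by
  set c' : ℝ := max x (min c y) with hc'
  have hxc' : x ≤ c' := le_max_left _ _
  have hc'y : c' ≤ y := max_le hxy (min_le_right _ _)
  rw [← intervalIntegral.integral_add_adjacent_intervals (hint x c') (hint c' y)]
  have h1 : ∫ σ in x..c', dF σ = F c' - F x := by
    apply ftc1 (c := d) hxc' hcont _ hint
    intro σ hσ hσd
    refine hderiv σ ⟨hσ.1, lt_of_lt_of_le hσ.2 hc'y⟩ ?_ hσd
    intro hEq
    rw [hEq] at hσ
    rcases lt_max_iff.mp hσ.2 with h | h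
    · exact absurd hσ.1 (not_lt.mpr h.le)
    · exact absurd h (not_lt.mpr (min_le_left _ _))
  have h2 : ∫ σ in c'..y, dF σ = F y - F c' := by
    apply ftc1 (c := d) hc'y hcont _ hint
    intro σ hσ hσd
    refine hderiv σ ⟨lt_of_le_of_lt hxc' hσ.1, hσ.2⟩ ?_ hσd
    intro hEq
    rw [hEq] at hσ
    have h1' : max x (min c y) < c := hσ.1
    rw [min_eq_left hσ.2.le] at h1'
    exact absurd h1' (not_lt.mpr (le_max_right _ _))
  rw [h1, h2]; ring

end FTC

/-! ### The kernel of the first-order problem -/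

noncomputable def Kk (T m a b t s : ℝ) : ℝ :=
  a * psi T m |t + s| - b * psi T m |t - s| + Wf T m (t - s)

noncomputable def gg (T m x : ℝ) : ℝ := if 0 ≤ x then psid T m x - 1/2 else 0

section Kernel

variable {T m a b : ℝ}

lemma continuous_gg (hm : m ≠ 0) (hSsT : Ss m T ≠ 0) : Continuous (gg T m) := by
  unfold gg
  apply Continuous.if
  · intro x hx
    have : x = 0 := by
      have h1 : frontier {x : ℝ | 0 ≤ x} = {0} := by
        have : {x : ℝ | 0 ≤ x} = Ici (0:ℝ) := rfl
        rw [this, frontier_Ici]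
      rw [h1] at hx
      simpa using hx
    rw [this, psid_zero hSsT]
    norm_num
  · exact (continuous_psid hm).sub continuous_const
  · exact continuous_const

lemma Wf_sub_step (hSsT : Ss m T ≠ 0) (x : ℝ) :
    Wf T m x - (if 0 ≤ x then (1:ℝ)/2 else -(1/2)) = gg T m x - gg T m (-x) := by
  rcases lt_trichotomy x 0 with h | h | h
  · rw [Wf_neg h]
    rw [if_neg (not_le.mpr h)]
    unfold gg
    rw [if_neg (not_le.mpr h), if_pos (by linarith : (0:ℝ) ≤ -x)]
    ring
  · subst h
    unfold gg
    rw [Wf_nonneg (le_refl (0:ℝ)), if_pos (le_refl (0:ℝ)), if_pos (le_refl (0:ℝ))]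
    simp [psid_zero hSsT]
  · rw [Wf_nonneg h.le]
    rw [if_pos h.le]
    unfold gg
    rw [if_pos h.le, if_neg (by linarith : ¬ (0:ℝ) ≤ -x)]
    ring

lemma Wf_neg_arg (hSsT : Ss m T ≠ 0) {x : ℝ} (hx : x ≠ 0) : Wf T m (-x) = -Wf T m x := by
  rcases lt_or_gt_of_ne hx with h | h
  · rw [Wf_nonneg (by linarith : (0:ℝ) ≤ -x), Wf_neg h]
    ring
  · rw [Wf_neg (by linarith : -x < 0), Wf_nonneg h.le]
    ring_nf

lemma Kk_meas_left (hm : m ≠ 0) (s : ℝ) : Measurable (fun t => Kk T m a b t s) := by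
  unfold Kk
  apply Measurable.add
  · apply Measurable.sub
    · exact (continuous_const.mul ((continuous_psi hm).comp
        ((continuous_id.add continuous_const).abs))).measurable
    · exact (continuous_const.mul ((continuous_psi hm).comp
        ((continuous_id.sub continuous_const).abs))).measurable
  · exact (Wf_measurable hm).comp (measurable_id.sub measurable_const)

lemma Kk_meas_right (hm : m ≠ 0) (t : ℝ) : Measurable (fun s => Kk T m a b t s) := by
  unfold Kk
  apply Measurable.add
  · apply Measurable.sub
    · exact (continuous_const.mul ((continuous_psi hm).comp
        ((continuous_const.add continuous_id).abs))).measurable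
    · exact (continuous_const.mul ((continuous_psi hm).comp
        ((continuous_const.sub continuous_id).abs))).measurable
  · exact (Wf_measurable hm).comp (measurable_const.sub measurable_id)

lemma Kk_meas_pair (hm : m ≠ 0) :
    Measurable (fun z : ℝ × ℝ => Kk T m a b z.1 z.2) := by
  unfold Kk
  apply Measurable.add
  · apply Measurable.sub
    · exact (continuous_const.mul ((continuous_psi hm).comp
        ((continuous_fst.add continuous_snd).abs))).measurable
    · exact (continuous_const.mul ((continuous_psi hm).comp
        ((continuous_fst.sub continuous_snd).abs))).measurable
  · exact (Wf_measurable hm).comp (measurable_fst.sub measurable_snd)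

lemma abs_psi_abs_le (T m x : ℝ) : |psi T m (|x|)| ≤ |psi T m x| + |psi T m (-x)| := by
  rcases le_or_gt 0 x with h | h
  · rw [abs_of_nonneg h]
    have := abs_nonneg (psi T m (-x)); linarith [le_refl |psi T m x|]
  · rw [abs_of_neg h]
    have := abs_nonneg (psi T m x); linarith [le_refl |psi T m (-x)|]

/-- A continuous dominating function for `|Kk t s|`, varying in `t`. -/
noncomputable def KB (T m a b t s : ℝ) : ℝ :=
  |a| * (|psi T m (t + s)| + |psi T m (-(t + s))|) +
  |b| * (|psi T m (t - s)| + |psi T m (-(t - s))|) +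
  (|psid T m (t - s)| + |psid T m (-(t - s))|)

lemma abs_Kk_le (t s : ℝ) : |Kk T m a b t s| ≤ KB T m a b t s := by
  have e1 : |psi T m (|t + s|)| ≤ |psi T m (t + s)| + |psi T m (-(t + s))| :=
    abs_psi_abs_le T m _
  have e2 : |psi T m (|t - s|)| ≤ |psi T m (t - s)| + |psi T m (-(t - s))| :=
    abs_psi_abs_le T m _
  have e3 : |Wf T m (t - s)| ≤ |psid T m (t - s)| + |psid T m (-(t - s))| := Wf_abs_le _
  have h0 : |Kk T m a b t s| ≤ |a| * |psi T m (|t + s|)| + |b| * |psi T m (|t - s|)|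
      + |Wf T m (t - s)| := by
    unfold Kk
    calc |a * psi T m (|t + s|) - b * psi T m (|t - s|) + Wf T m (t - s)|
        ≤ |a * psi T m (|t + s|) - b * psi T m (|t - s|)| + |Wf T m (t - s)| := abs_add_le _ _
      _ ≤ |a * psi T m (|t + s|)| + |b * psi T m (|t - s|)| + |Wf T m (t - s)| := by
          linarith [abs_sub (a * psi T m (|t + s|)) (b * psi T m (|t - s|))]
      _ = |a| * |psi T m (|t + s|)| + |b| * |psi T m (|t - s|)| + |Wf T m (t - s)| := by
          rw [abs_mul, abs_mul]
  unfold KB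
  have ha := abs_nonneg a
  have hb := abs_nonneg b
  nlinarith [mul_le_mul_of_nonneg_left e1 ha, mul_le_mul_of_nonneg_left e2 hb]

lemma continuous_KB (hm : m ≠ 0) (s : ℝ) : Continuous (fun t => KB T m a b t s) := by
  unfold KB
  have hpsi := continuous_psi (T := T) hm
  have hpsid := continuous_psid (T := T) hm
  fun_prop

end Kernel


section Kernel2

variable {T m a b : ℝ}

lemma KB_nonneg (t s : ℝ) : 0 ≤ KB T m a b t s := by
  unfold KB
  positivity

lemma dF_intervalIntegrable (hm : m ≠ 0) (s : ℝ) (u v : ℝ) :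
    IntervalIntegrable (fun σ => -(a * Kk T m a b (-σ) s + b * Kk T m a b σ s)) volume u v := by
  have hBd : Continuous (fun σ => |a| * KB T m a b (-σ) s + |b| * KB T m a b σ s) := by
    have h1 : Continuous (fun σ : ℝ => KB T m a b (-σ) s) :=
      (continuous_KB hm s).comp continuous_neg
    have h2 : Continuous (fun σ : ℝ => KB T m a b σ s) := continuous_KB hm s
    fun_prop
  have hmeas : Measurable (fun σ => -(a * Kk T m a b (-σ) s + b * Kk T m a b σ s)) := by
    have h1 : Measurable (fun σ : ℝ => Kk T m a b (-σ) s) :=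
      (Kk_meas_left hm s).comp measurable_neg
    have h2 : Measurable (fun σ : ℝ => Kk T m a b σ s) := Kk_meas_left hm s
    exact ((h1.const_mul a).add (h2.const_mul b)).neg
  refine (hBd.intervalIntegrable u v).mono_fun hmeas.aestronglyMeasurable ?_
  refine ae_of_all _ (fun σ => ?_)
  have h1 := abs_Kk_le (T := T) (m := m) (a := a) (b := b) (-σ) s
  have h2 := abs_Kk_le (T := T) (m := m) (a := a) (b := b) σ s
  have hb1 := KB_nonneg (T := T) (m := m) (a := a) (b := b) (-σ) s
  have hb2 := KB_nonneg (T := T) (m := m) (a := a) (b := b) σ s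
  simp only [Real.norm_eq_abs]
  rw [abs_neg, abs_of_nonneg (by positivity : (0:ℝ) ≤ |a| * KB T m a b (-σ) s + |b| * KB T m a b σ s)]
  calc |a * Kk T m a b (-σ) s + b * Kk T m a b σ s|
      ≤ |a * Kk T m a b (-σ) s| + |b * Kk T m a b σ s| := abs_add_le _ _
    _ = |a| * |Kk T m a b (-σ) s| + |b| * |Kk T m a b σ s| := by rw [abs_mul, abs_mul]
    _ ≤ |a| * KB T m a b (-σ) s + |b| * KB T m a b σ s := by
        have := mul_le_mul_of_nonneg_left h1 (abs_nonneg a)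
        have := mul_le_mul_of_nonneg_left h2 (abs_nonneg b)
        nlinarith [abs_nonneg a, abs_nonneg b]

lemma Kk_bc (hSsT : Ss m T ≠ 0) {s : ℝ} (hs : s ∈ Ioo (-T) T) :
    Kk T m a b T s = Kk T m a b (-T) s := by
  obtain ⟨hs1, hs2⟩ := hs
  unfold Kk
  rw [abs_of_pos (by linarith : (0:ℝ) < T + s),
    abs_of_pos (by linarith : (0:ℝ) < T - s),
    abs_of_neg (by linarith : -T + s < 0),
    abs_of_neg (by linarith : -T - s < 0),
    Wf_nonneg (by linarith : (0:ℝ) ≤ T - s),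
    Wf_neg (by linarith : -T - s < 0)]
  rw [show -(-T + s) = T - s by ring, show -(-T - s) = T + s by ring]
  rw [psi_symm (x := s), psid_symm (x := s)]
  ring

/-- Key FTC identity: the kernel satisfies the "adjoint" equation in integrated form. -/
lemma kernel_int (hm : m ≠ 0) (hSsT : Ss m T ≠ 0) (hmm : m = a^2 - b^2)
    {s t : ℝ} (hs : s ∈ Ioo (-T) T) (ht : -T ≤ t) :
    ∫ σ in (-T)..t, (a * Kk T m a b (-σ) s + b * Kk T m a b σ s)
      = Kk T m a b (-T) s - Kk T m a b t s + (if s ≤ t then 1 else 0) := by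
  obtain ⟨hs1, hs2⟩ := hs
  set F : ℝ → ℝ := fun σ => a * psi T m |σ + s| - b * psi T m |σ - s|
      + (gg T m (σ - s) - gg T m (s - σ)) with hF
  set dF : ℝ → ℝ := fun σ => -(a * Kk T m a b (-σ) s + b * Kk T m a b σ s) with hdF
  have hFcont : Continuous F := by
    have h1 : Continuous (fun σ : ℝ => psi T m |σ + s|) :=
      (continuous_psi hm).comp ((continuous_id.add continuous_const).abs)
    have h2 : Continuous (fun σ : ℝ => psi T m |σ - s|) :=
      (continuous_psi hm).comp ((continuous_id.sub continuous_const).abs)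
    have h3 : Continuous (fun σ : ℝ => gg T m (σ - s)) :=
      (continuous_gg hm hSsT).comp (continuous_id.sub continuous_const)
    have h4 : Continuous (fun σ : ℝ => gg T m (s - σ)) :=
      (continuous_gg hm hSsT).comp (continuous_const.sub continuous_id)
    fun_prop
  have hFform : ∀ σ, F σ = Kk T m a b σ s - (if 0 ≤ σ - s then (1:ℝ)/2 else -(1/2)) := by
    intro σ
    have := Wf_sub_step (T := T) (m := m) hSsT (σ - s)
    rw [show -(σ - s) = s - σ by ring] at this
    simp only [hF]
    unfold Kk
    linarith [this]
  have hFderiv : ∀ σ ∈ Ioo (-T) t, σ ≠ s → σ ≠ -s → HasDerivAt F (dF σ) σ := by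
    intro σ _ hσs hσns
    -- F agrees with  σ ↦ Kk σ s - H(σ - s)  and near σ the step is constant
    have hstep : ∀ᶠ u in nhds σ, F u = Kk T m a b u s - (if 0 ≤ σ - s then (1:ℝ)/2 else -(1/2)) := by
      rcases lt_or_gt_of_ne hσs with h | h
      · filter_upwards [Iio_mem_nhds h] with u hu
        rw [hFform u, if_neg (by simp at hu; intro hc; linarith : ¬ (0:ℝ) ≤ u - s),
          if_neg (by intro hc; linarith : ¬ (0:ℝ) ≤ σ - s)]
      · filter_upwards [Ioi_mem_nhds h] with u hu
        rw [hFform u, if_pos (by simp at hu; linarith : (0:ℝ) ≤ u - s),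
          if_pos (by linarith : (0:ℝ) ≤ σ - s)]
    have hK : HasDerivAt (fun u => Kk T m a b u s)
        (a * Wf T m (σ + s) - b * Wf T m (σ - s) + -m * psi T m |σ - s|) σ := by
      unfold Kk
      have h1 : HasDerivAt (fun u : ℝ => psi T m |u + s|) (Wf T m (σ + s)) σ := by
        have := hasDerivAt_psi_abs (T := T) hm (t := σ) (s := -s)
          (by intro hc; exact hσns hc)
        simpa [sub_neg_eq_add] using this
      have h2 : HasDerivAt (fun u : ℝ => psi T m |u - s|) (Wf T m (σ - s)) σ :=
        hasDerivAt_psi_abs hm hσs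
      have h3 : HasDerivAt (fun u : ℝ => Wf T m (u - s)) (-m * psi T m |σ - s|) σ :=
        hasDerivAt_Wf_abs hm hσs
      exact ((h1.const_mul a).sub (h2.const_mul b)).add h3
    have hKstep : HasDerivAt F
        (a * Wf T m (σ + s) - b * Wf T m (σ - s) + -m * psi T m |σ - s|) σ := by
      have := (hK.sub_const (if 0 ≤ σ - s then (1:ℝ)/2 else -(1/2)))
      exact this.congr_of_eventuallyEq hstep
    convert hKstep using 1
    -- algebra: dF σ = a⋅Wf(σ+s) − b⋅Wf(σ−s) − m⋅ψ|σ−s|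
    simp only [hdF]
    unfold Kk
    have e1 : |(-σ) + s| = |σ - s| := by rw [show (-σ) + s = -(σ - s) by ring, abs_neg]
    have e2 : |(-σ) - s| = |σ + s| := by rw [show (-σ) - s = -(σ + s) by ring, abs_neg]
    have e3 : Wf T m (-σ - s) = -Wf T m (σ + s) := by
      rw [show -σ - s = -(σ + s) by ring]
      exact Wf_neg_arg hSsT (by intro hc; apply hσns; linarith)
    rw [e1, e2, e3, hmm]
    ring
  have hint : ∀ u v : ℝ, IntervalIntegrable dF volume u v := dF_intervalIntegrable hm s
  have hftc := ftc2 (c := s) (d := -s) ht hFcont hFderiv hint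
  have hres : ∫ σ in (-T)..t, (a * Kk T m a b (-σ) s + b * Kk T m a b σ s) = -(F t - F (-T)) := by
    rw [← hftc]
    rw [← intervalIntegral.integral_neg]
    congr 1
    funext σ
    simp only [hdF]
    ring
  rw [hres, hFform t, hFform (-T)]
  rw [if_neg (by intro hc; linarith : ¬ (0:ℝ) ≤ -T - s)]
  have hiff : (0 ≤ t - s) = (s ≤ t) := by
    simp [sub_nonneg]
  rcases le_or_gt s t with h | h
  · rw [if_pos (by linarith : (0:ℝ) ≤ t - s), if_pos h]; ring
  · rw [if_neg (by intro hc; linarith : ¬ (0:ℝ) ≤ t - s), if_neg (not_le.mpr h)]; ring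

end Kernel2


/-! ### The solution operator -/

noncomputable def u0 (T m a b : ℝ) (h' : ℝ → ℝ) (t : ℝ) : ℝ :=
  ∫ s in Ioc (-T) T, Kk T m a b t s * h' s

section U0

variable {T m a b : ℝ} {h' : ℝ → ℝ}

lemma ae_ne_vol (c : ℝ) : ∀ᵐ s : ℝ, s ≠ c := by
  rw [ae_iff]
  have : {s : ℝ | ¬ s ≠ c} = {c} := by ext x; simp
  rw [this]
  exact Real.volume_singleton

lemma continuous_KB_right (hm : m ≠ 0) (t : ℝ) : Continuous (fun s => KB T m a b t s) := by
  unfold KB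
  have hpsi := continuous_psi (T := T) hm
  have hpsid := continuous_psid (T := T) hm
  fun_prop

lemma KB_bound_exists (hm : m ≠ 0) (hT : 0 < T) :
    ∃ C : ℝ, 0 ≤ C ∧ ∀ t' ∈ Icc (-(2*T)) (2*T), ∀ s ∈ Icc (-T) T, KB T m a b t' s ≤ C := by
  have hKBcont : Continuous (fun z : ℝ × ℝ => KB T m a b z.1 z.2) := by
    unfold KB
    have hpsi := continuous_psi (T := T) hm
    have hpsid := continuous_psid (T := T) hm
    fun_prop
  have hK : IsCompact ((Icc (-(2*T)) (2*T)) ×ˢ (Icc (-T) T)) :=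
    (isCompact_Icc).prod isCompact_Icc
  obtain ⟨C, hC⟩ := hK.exists_bound_of_continuousOn hKBcont.continuousOn
  refine ⟨max C 0, le_max_right _ _, fun t' ht' s hs => ?_⟩
  have := hC (t', s) ⟨ht', hs⟩
  rw [Real.norm_eq_abs] at this
  calc KB T m a b t' s ≤ |KB T m a b t' s| := le_abs_self _
    _ ≤ C := this
    _ ≤ max C 0 := le_max_left _ _

lemma integrableOn_Kk_mul (hm : m ≠ 0) (hh'i : IntegrableOn h' (Icc (-T) T))
    (hh'm : Measurable h') (t : ℝ) :
    IntegrableOn (fun s => Kk T m a b t s * h' s) (Ioc (-T) T) := by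
  obtain ⟨C, hC⟩ := (isCompact_Icc (a := -T) (b := T)).exists_bound_of_continuousOn
    (continuous_KB_right (a := a) (b := b) hm t).continuousOn
  have hg0 : IntegrableOn (fun s => C * |h' s|) (Icc (-T) T) := hh'i.norm.const_mul C
  have hg : IntegrableOn (fun s => C * |h' s|) (Ioc (-T) T) :=
    hg0.mono_set Ioc_subset_Icc_self
  refine Integrable.mono' hg ((Kk_meas_right hm t).mul hh'm).aestronglyMeasurable ?_
  filter_upwards [ae_restrict_mem measurableSet_Ioc] with s hsm
  have hsm' : s ∈ Icc (-T) T := Ioc_subset_Icc_self hsm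
  have h1 := abs_Kk_le (T := T) (m := m) (a := a) (b := b) t s
  have h2 := hC s hsm'
  rw [Real.norm_eq_abs] at h2 ⊢
  rw [abs_mul]
  have : |Kk T m a b t s| ≤ C := le_trans h1 (le_trans (le_abs_self _) h2)
  exact mul_le_mul_of_nonneg_right this (abs_nonneg _)

lemma u0_continuousAt (hm : m ≠ 0) (hT : 0 < T) (hh'i : IntegrableOn h' (Icc (-T) T))
    (hh'm : Measurable h') {t₀ : ℝ} (ht₀ : t₀ ∈ Icc (-T) T) :
    ContinuousAt (u0 T m a b h') t₀ := by
  obtain ⟨C, hC0, hC⟩ := KB_bound_exists (a := a) (b := b) hm hT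
  apply MeasureTheory.continuousAt_of_dominated (bound := fun s => C * |h' s|)
  · exact Eventually.of_forall fun t =>
      ((Kk_meas_right hm t).mul hh'm).aestronglyMeasurable
  · have hnb : Icc (-(2*T)) (2*T) ∈ nhds t₀ :=
      Icc_mem_nhds (by obtain ⟨h1, h2⟩ := ht₀; linarith)
        (by obtain ⟨h1, h2⟩ := ht₀; linarith)
    filter_upwards [hnb] with t ht
    filter_upwards [ae_restrict_mem measurableSet_Ioc] with s hsm
    have hsm' : s ∈ Icc (-T) T := Ioc_subset_Icc_self hsm
    rw [Real.norm_eq_abs, abs_mul]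
    exact mul_le_mul_of_nonneg_right (le_trans (abs_Kk_le t s) (hC t ht s hsm'))
      (abs_nonneg _)
  · have hg0 : IntegrableOn (fun s => C * |h' s|) (Icc (-T) T) := hh'i.norm.const_mul C
    exact hg0.mono_set Ioc_subset_Icc_self
  · filter_upwards [ae_restrict_of_ae (ae_ne_vol t₀)] with s hs
    apply ContinuousAt.mul _ continuousAt_const
    unfold Kk
    apply ContinuousAt.add
    · apply ContinuousAt.sub
      · exact (continuous_const.mul ((continuous_psi hm).comp
          ((continuous_id.add continuous_const).abs))).continuousAt
      · exact (continuous_const.mul ((continuous_psi hm).comp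
          ((continuous_id.sub continuous_const).abs))).continuousAt
    · have : HasDerivAt (fun u => Wf T m (u - s)) (-m * psi T m |t₀ - s|) t₀ :=
        hasDerivAt_Wf_abs hm (Ne.symm hs)
      exact this.continuousAt
  
lemma u0_continuousOn (hm : m ≠ 0) (hT : 0 < T) (hh'i : IntegrableOn h' (Icc (-T) T))
    (hh'm : Measurable h') : ContinuousOn (u0 T m a b h') (Icc (-T) T) :=
  fun t ht => (u0_continuousAt hm hT hh'i hh'm ht).continuousWithinAt

lemma u0_bc (hm : m ≠ 0) (hSsT : Ss m T ≠ 0) :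
    u0 T m a b h' T = u0 T m a b h' (-T) := by
  unfold u0
  apply MeasureTheory.integral_congr_ae
  filter_upwards [ae_restrict_mem measurableSet_Ioc, ae_restrict_of_ae (ae_ne_vol T)]
    with s hsm hsne
  have hsIoo : s ∈ Ioo (-T) T := ⟨hsm.1, lt_of_le_of_ne hsm.2 hsne⟩
  rw [Kk_bc hSsT hsIoo]


lemma u0_main (hT : 0 < T) (hm : m ≠ 0) (hSsT : Ss m T ≠ 0) (hmm : m = a^2 - b^2)
    (hh'i : IntegrableOn h' (Icc (-T) T)) (hh'm : Measurable h')
    {t : ℝ} (ht : t ∈ Icc (-T) T) :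
    u0 T m a b h' t = u0 T m a b h' (-T)
      + ∫ σ in (-T)..t, (h' σ - a * u0 T m a b h' (-σ) - b * u0 T m a b h' σ) := by
  obtain ⟨ht1, ht2⟩ := ht
  set U : ℝ → ℝ := u0 T m a b h' with hU
  set K' : ℝ → ℝ → ℝ := Kk T m a b with hK'
  obtain ⟨C, hC0, hC⟩ := KB_bound_exists (a := a) (b := b) hm hT
  set C2 : ℝ := (|a| + |b|) * C with hC2
  have hK2 : ∀ σ ∈ Icc (-T) T, ∀ s ∈ Icc (-T) T, |a * K' (-σ) s + b * K' σ s| ≤ C2 := by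
    intro σ hσ s hs
    have h2T : σ ∈ Icc (-(2*T)) (2*T) := ⟨by linarith [hσ.1], by linarith [hσ.2]⟩
    have h2T' : -σ ∈ Icc (-(2*T)) (2*T) := ⟨by linarith [hσ.2], by linarith [hσ.1]⟩
    have e1 : |K' (-σ) s| ≤ C := le_trans (abs_Kk_le _ _) (hC _ h2T' s hs)
    have e2 : |K' σ s| ≤ C := le_trans (abs_Kk_le _ _) (hC _ h2T s hs)
    calc |a * K' (-σ) s + b * K' σ s| ≤ |a * K' (-σ) s| + |b * K' σ s| := abs_add_le _ _
      _ = |a| * |K' (-σ) s| + |b| * |K' σ s| := by rw [abs_mul, abs_mul]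
      _ ≤ |a| * C + |b| * C := by
          have := mul_le_mul_of_nonneg_left e1 (abs_nonneg a)
          have := mul_le_mul_of_nonneg_left e2 (abs_nonneg b)
          nlinarith [abs_nonneg a, abs_nonneg b]
      _ = C2 := by rw [hC2]; ring
  have hΦm : Measurable (fun p : ℝ × ℝ => (a * K' (-p.1) p.2 + b * K' p.1 p.2) * h' p.2) := by
    apply Measurable.mul _ (hh'm.comp measurable_snd)
    apply Measurable.add
    · exact ((Kk_meas_pair hm).comp (measurable_fst.neg.prodMk measurable_snd)).const_mul a
    · exact (Kk_meas_pair hm).const_mul b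
  have hst : Ioc (-T) t ⊆ Icc (-T) T := fun x hx => ⟨hx.1.le, le_trans hx.2 ht2⟩
  haveI hfin : IsFiniteMeasure (volume.restrict (Ioc (-T) t)) :=
    ⟨by rw [Measure.restrict_apply_univ]; exact measure_Ioc_lt_top⟩
  have hg0 : IntegrableOn (fun s => C2 * |h' s|) (Icc (-T) T) := hh'i.norm.const_mul C2
  have hg : IntegrableOn (fun s => C2 * |h' s|) (Ioc (-T) T) :=
    hg0.mono_set Ioc_subset_Icc_self
  have hslice : ∀ σ ∈ Icc (-T) T, IntegrableOn
      (fun s => (a * K' (-σ) s + b * K' σ s) * h' s) (Ioc (-T) T) := by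
    intro σ hσ
    refine Integrable.mono' hg
      (((hΦm.comp (measurable_const.prodMk measurable_id)).aestronglyMeasurable)) ?_
    filter_upwards [ae_restrict_mem measurableSet_Ioc] with s hsm
    rw [Real.norm_eq_abs, abs_mul]
    exact mul_le_mul_of_nonneg_right (hK2 σ hσ s (Ioc_subset_Icc_self hsm)) (abs_nonneg _)
  have hIntProd : Integrable (fun p : ℝ × ℝ => (a * K' (-p.1) p.2 + b * K' p.1 p.2) * h' p.2)
      ((volume.restrict (Ioc (-T) t)).prod (volume.restrict (Ioc (-T) T))) := by
    rw [MeasureTheory.integrable_prod_iff hΦm.aestronglyMeasurable]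
    constructor
    · filter_upwards [ae_restrict_mem measurableSet_Ioc] with σ hσ
      exact hslice σ (hst hσ)
    · apply Integrable.mono' (g := fun _ : ℝ => C2 * ∫ s in Ioc (-T) T, |h' s|)
        (integrable_const _)
        (hΦm.aestronglyMeasurable.norm.integral_prod_right')
      filter_upwards [ae_restrict_mem measurableSet_Ioc] with σ hσ
      have hσ' : σ ∈ Icc (-T) T := hst hσ
      have hnn : 0 ≤ ∫ s in Ioc (-T) T, ‖(a * K' (-σ) s + b * K' σ s) * h' s‖ :=
        integral_nonneg (fun s => norm_nonneg _)
      rw [Real.norm_eq_abs, abs_of_nonneg hnn]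
      have hb : ∀ s ∈ Ioc (-T) T, ‖(a * K' (-σ) s + b * K' σ s) * h' s‖ ≤ C2 * |h' s| := by
        intro s hsm
        rw [Real.norm_eq_abs, abs_mul]
        exact mul_le_mul_of_nonneg_right (hK2 σ hσ' s (Ioc_subset_Icc_self hsm)) (abs_nonneg _)
      calc ∫ s in Ioc (-T) T, ‖(a * K' (-σ) s + b * K' σ s) * h' s‖
          ≤ ∫ s in Ioc (-T) T, C2 * |h' s| := by
            apply integral_mono_of_nonneg (ae_of_all _ fun s => norm_nonneg _) hg
            filter_upwards [ae_restrict_mem measurableSet_Ioc] with s hsm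
            exact hb s hsm
        _ = C2 * ∫ s in Ioc (-T) T, |h' s| := by rw [MeasureTheory.integral_const_mul]
  have hswap := MeasureTheory.integral_integral_swap
    (f := fun σ s => (a * K' (-σ) s + b * K' σ s) * h' s)
    (μ := volume.restrict (Ioc (-T) t)) (ν := volume.restrict (Ioc (-T) T)) hIntProd
  -- inner σ-side
  have hinner : ∀ σ, ∫ s in Ioc (-T) T, (a * K' (-σ) s + b * K' σ s) * h' s
      = a * U (-σ) + b * U σ := by
    intro σ
    have heq : (fun s => (a * K' (-σ) s + b * K' σ s) * h' s)
        = fun s => a * (K' (-σ) s * h' s) + b * (K' σ s * h' s) := by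
      funext s; ring
    rw [heq, integral_add
      ((integrableOn_Kk_mul hm hh'i hh'm (-σ)).const_mul a)
      ((integrableOn_Kk_mul hm hh'i hh'm σ).const_mul b),
      MeasureTheory.integral_const_mul, MeasureTheory.integral_const_mul]
    rfl
  -- inner s-side (a.e.)
  have hindint : IntegrableOn (fun s => (if s ≤ t then (1:ℝ) else 0) * h' s) (Ioc (-T) T) := by
    have h1 : IntegrableOn h' (Ioc (-T) T) := hh'i.mono_set Ioc_subset_Icc_self
    have h2 := h1.indicator (measurableSet_Iic (a := t))
    refine h2.congr_fun ?_ measurableSet_Ioc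
    intro s _
    rw [Set.indicator_apply]
    by_cases hc : s ≤ t <;> simp [hc, Set.mem_Iic]
  have houter : ∫ s in Ioc (-T) T, (∫ σ in Ioc (-T) t, (a * K' (-σ) s + b * K' σ s) * h' s)
      = U (-T) - U t + ∫ σ in Ioc (-T) t, h' σ := by
    have hae : ∀ᵐ s ∂(volume.restrict (Ioc (-T) T)),
        (∫ σ in Ioc (-T) t, (a * K' (-σ) s + b * K' σ s) * h' s)
          = (K' (-T) s - K' t s + (if s ≤ t then 1 else 0)) * h' s := by
      filter_upwards [ae_restrict_mem measurableSet_Ioc, ae_restrict_of_ae (ae_ne_vol T)]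
        with s hsm hsne
      have hsIoo : s ∈ Ioo (-T) T := ⟨hsm.1, lt_of_le_of_ne hsm.2 hsne⟩
      rw [MeasureTheory.integral_mul_const]
      congr 1
      rw [← intervalIntegral.integral_of_le ht1]
      exact kernel_int hm hSsT hmm hsIoo ht1
    rw [MeasureTheory.integral_congr_ae hae]
    have hexp : (fun s => (K' (-T) s - K' t s + (if s ≤ t then (1:ℝ) else 0)) * h' s)
        = fun s => (K' (-T) s * h' s - K' t s * h' s)
            + (if s ≤ t then (1:ℝ) else 0) * h' s := by
      funext s; ring
    have hi1 : IntegrableOn (fun s => K' (-T) s * h' s - K' t s * h' s) (Ioc (-T) T) :=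
      (integrableOn_Kk_mul hm hh'i hh'm (-T)).sub (integrableOn_Kk_mul hm hh'i hh'm t)
    rw [hexp, integral_add hi1 hindint,
      integral_sub (integrableOn_Kk_mul hm hh'i hh'm (-T)) (integrableOn_Kk_mul hm hh'i hh'm t)]
    have hindval : ∫ s in Ioc (-T) T, (if s ≤ t then (1:ℝ) else 0) * h' s
        = ∫ σ in Ioc (-T) t, h' σ := by
      have h1 : (fun s => (if s ≤ t then (1:ℝ) else 0) * h' s)
          = (Iic t).indicator h' := by
        funext s
        rw [Set.indicator_apply]
        by_cases hc : s ≤ t <;> simp [hc, Set.mem_Iic]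
      have hset : Iic t ∩ Ioc (-T) T = Ioc (-T) t := by
        ext x
        simp only [Set.mem_inter_iff, Set.mem_Iic, Set.mem_Ioc]
        constructor
        · rintro ⟨h1', h2', h3'⟩; exact ⟨h2', h1'⟩
        · rintro ⟨h1', h2'⟩; exact ⟨h2', h1', by linarith⟩
      rw [h1, MeasureTheory.integral_indicator (measurableSet_Iic),
        Measure.restrict_restrict (measurableSet_Iic), hset]
    rw [hindval]
    rfl
  -- assembly
  have hUc : ContinuousOn U (Icc (-T) T) := u0_continuousOn hm hT hh'i hh'm
  have hUnegc : ContinuousOn (fun σ => a * U (-σ) + b * U σ) (Icc (-T) T) := by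
    apply ContinuousOn.add
    · exact (hUc.comp continuous_neg.continuousOn
        (fun x hx => ⟨by linarith [hx.2], by linarith [hx.1]⟩)).const_smul a
    · exact hUc.const_smul b
  have hiint1 : IntervalIntegrable h' volume (-T) t := by
    have : IntegrableOn h' (uIcc (-T) t) := hh'i.mono_set
      (by rw [uIcc_of_le ht1]; exact fun x hx => ⟨hx.1, le_trans hx.2 ht2⟩)
    exact this.intervalIntegrable
  have hiint2 : IntervalIntegrable (fun σ => a * U (-σ) + b * U σ) volume (-T) t := by
    apply ContinuousOn.intervalIntegrable
    apply hUnegc.mono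
    rw [uIcc_of_le ht1]
    exact fun x hx => ⟨hx.1, le_trans hx.2 ht2⟩
  have hsplit : ∫ σ in (-T)..t, (h' σ - a * U (-σ) - b * U σ)
      = (∫ σ in (-T)..t, h' σ) - ∫ σ in (-T)..t, (a * U (-σ) + b * U σ) := by
    rw [← intervalIntegral.integral_sub hiint1 hiint2]
    congr 1
    funext σ
    ring
  have hT2 : ∫ σ in (-T)..t, (a * U (-σ) + b * U σ)
      = U (-T) - U t + ∫ σ in Ioc (-T) t, h' σ := by
    rw [intervalIntegral.integral_of_le ht1]
    have : (fun σ => a * U (-σ) + b * U σ)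
        = fun σ => ∫ s in Ioc (-T) T, (a * K' (-σ) s + b * K' σ s) * h' s := by
      funext σ; rw [hinner σ]
    rw [this, hswap, houter]
  rw [hsplit, hT2, intervalIntegral.integral_of_le ht1]
  ring

end U0


/-! ### Uniqueness for the first-order problem -/

section Homog

variable {T m a b : ℝ}

lemma homog_zero (hT : 0 < T) (hm : m ≠ 0) (hSsT : Ss m T ≠ 0) (hmm : m = a^2 - b^2)
    {d gd : ℝ → ℝ}
    (hgd : IntegrableOn gd (Icc (-T) T))
    (hrep : ∀ t ∈ Icc (-T) T, d t = d (-T) + ∫ σ in (-T)..t, gd σ)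
    (hae : ∀ᵐ σ ∂(volume.restrict (Icc (-T) T)), gd σ = -a * d (-σ) - b * d σ)
    (hper : d (-T) = d T) :
    ∀ t ∈ Icc (-T) T, d t = 0 := by
  have hTIcc : uIcc (-T) T = Icc (-T) T := uIcc_of_le (by linarith)
  -- d is continuous on Icc
  have hprim : ContinuousOn (fun x => ∫ σ in (-T)..x, gd σ) (Icc (-T) T) := by
    have := intervalIntegral.continuousOn_primitive_interval
      (a := -T) (b := T) (μ := volume) (f := gd) (by rwa [hTIcc])
    rwa [hTIcc] at this
  have hdc : ContinuousOn d (Icc (-T) T) := by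
    apply ContinuousOn.congr (continuousOn_const.add hprim)
    intro t ht
    exact hrep t ht
  set φ : ℝ → ℝ := fun σ => -a * d (-σ) - b * d σ with hφ
  have hmaps : MapsTo (fun σ : ℝ => -σ) (Icc (-T) T) (Icc (-T) T) := by
    intro x hx
    constructor
    · show -T ≤ -x; linarith [hx.2]
    · show -x ≤ T; linarith [hx.1]
  have hφc : ContinuousOn φ (Icc (-T) T) := by
    apply ContinuousOn.sub
    · exact ((hdc.comp continuous_neg.continuousOn hmaps).const_smul (-a))
    · exact hdc.const_smul b
  have hφint : IntegrableOn φ (Icc (-T) T) := hφc.integrableOn_Icc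
  -- the integral representations agree
  have hae' : ∀ᵐ σ ∂volume, σ ∈ Icc (-T) T → gd σ = φ σ :=
    (ae_restrict_iff' measurableSet_Icc).mp hae
  have hgdφ : ∀ t ∈ Icc (-T) T, (∫ σ in (-T)..t, gd σ) = ∫ σ in (-T)..t, φ σ := by
    intro t ht
    apply intervalIntegral.integral_congr_ae
    filter_upwards [hae'] with σ hσ hmem
    apply hσ
    rw [uIoc_of_le ht.1] at hmem
    exact ⟨hmem.1.le, le_trans hmem.2 ht.2⟩
  have hrepφ : ∀ t ∈ Icc (-T) T, d t = d (-T) + ∫ σ in (-T)..t, φ σ := by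
    intro t ht
    rw [hrep t ht, hgdφ t ht]
  -- differentiate
  have hd' : ∀ t ∈ Ioo (-T) T, HasDerivAt d (φ t) t := by
    intro t ht
    have hIccmem : Icc (-T) T ∈ nhds t := Icc_mem_nhds ht.1 ht.2
    have hφt : ContinuousAt φ t := hφc.continuousAt hIccmem
    have hsmaf : StronglyMeasurableAtFilter φ (nhds t) volume :=
      ContinuousOn.stronglyMeasurableAtFilter isOpen_Ioo
        (hφc.mono Ioo_subset_Icc_self) t ht
    have hii : IntervalIntegrable φ volume (-T) t := by
      have : IntegrableOn φ (uIcc (-T) t) := hφint.mono_set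
        (by rw [uIcc_of_le ht.1.le]; exact fun x hx => ⟨hx.1, le_trans hx.2 ht.2.le⟩)
      exact this.intervalIntegrable
    have hFTC := intervalIntegral.integral_hasDerivAt_right hii hsmaf hφt
    have hev : (fun u => d (-T) + ∫ σ in (-T)..u, φ σ) =ᶠ[nhds t] d := by
      filter_upwards [hIccmem] with u hu
      exact (hrepφ u hu).symm
    have := ((hasDerivAt_const t (d (-T))).add hFTC).congr_of_eventuallyEq hev.symm
    simpa using this
  have hφ' : ∀ t ∈ Ioo (-T) T, HasDerivAt φ (-m * d t) t := by
    intro t ht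
    have hnt : -t ∈ Ioo (-T) T := ⟨by linarith [ht.2], by linarith [ht.1]⟩
    have h1 : HasDerivAt (fun σ : ℝ => d (-σ)) (φ (-t) * (-1)) t :=
      (hd' (-t) hnt).comp t ((hasDerivAt_id t).neg)
    have h2 : HasDerivAt φ (-a * (φ (-t) * (-1)) - b * φ t) t :=
      (h1.const_mul (-a)).sub ((hd' t ht).const_mul b)
    convert h2 using 1
    simp only [hφ, neg_neg]
    rw [hmm]
    ring
  -- global solution form
  have h0mem : (0:ℝ) ∈ Ioo (-T) T := ⟨by linarith, hT⟩
  set Y : ℝ → ℝ := fun u => d 0 * Cc m u + φ 0 * Ss m u with hY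
  set Yd : ℝ → ℝ := fun u => -m * d 0 * Ss m u + φ 0 * Cc m u with hYd
  have hYderiv : ∀ u : ℝ, HasDerivAt Y (Yd u) u := by
    intro u
    have := ((hasDerivAt_Cc hm u).const_mul (d 0)).add ((hasDerivAt_Ss hm u).const_mul (φ 0))
    refine this.congr_deriv ?_
    simp only [hYd]; ring
  have hYdderiv : ∀ u : ℝ, HasDerivAt Yd (-m * Y u) u := by
    intro u
    have := ((hasDerivAt_Ss hm u).const_mul (-m * d 0)).add
      ((hasDerivAt_Cc hm u).const_mul (φ 0))
    refine this.congr_deriv ?_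
    simp only [hY]; ring
  have hdY : ∀ t ∈ Ioo (-T) T, d t = Y t := by
    intro t ht
    have hsub : uIcc 0 t ⊆ Ioo (-T) T := by
      intro u hu
      rw [mem_uIcc] at hu
      rcases hu with ⟨h1, h2⟩ | ⟨h1, h2⟩
      · exact ⟨by linarith, by linarith [ht.2]⟩
      · exact ⟨by linarith [ht.1], by linarith⟩
    have := solution_eq hm (x₀ := 0) (t := t) (f := d) (fd := φ)
      (fun u hu => hd' u (hsub hu)) (fun u hu => hφ' u (hsub hu))
    simpa [hY] using this
  have hφY : ∀ t ∈ Ioo (-T) T, φ t = Yd t := by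
    intro t ht
    have h1 : HasDerivAt d (φ t) t := hd' t ht
    have h2 : HasDerivAt Y (Yd t) t := hYderiv t
    have hev : d =ᶠ[nhds t] Y := by
      filter_upwards [Ioo_mem_nhds ht.1 ht.2] with u hu
      exact hdY u hu
    exact (h1.congr_of_eventuallyEq hev.symm).unique h2
  -- extend to the endpoints by continuity
  have hextend : ∀ (F FY : ℝ → ℝ), ContinuousOn F (Icc (-T) T) → Continuous FY →
      (∀ t ∈ Ioo (-T) T, F t = FY t) → ∀ t ∈ Icc (-T) T, F t = FY t := by
    intro F FY hFc hFYc hFeq t ht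
    rcases eq_or_lt_of_le ht.1 with h1 | h1
    · -- t = -T
      have hne : (nhdsWithin (-T : ℝ) (Ioo (-T) T)).NeBot := by
        rw [← mem_closure_iff_nhdsWithin_neBot, closure_Ioo (by linarith : (-T:ℝ) ≠ T)]
        exact ⟨le_refl _, by linarith⟩
      have hF : Tendsto F (nhdsWithin (-T) (Ioo (-T) T)) (nhds (F (-T))) :=
        (hFc.continuousWithinAt (left_mem_Icc.mpr (by linarith))).mono_left
          (nhdsWithin_mono _ Ioo_subset_Icc_self)
      have hFY : Tendsto F (nhdsWithin (-T) (Ioo (-T) T)) (nhds (FY (-T))) := by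
        refine ((hFYc.tendsto (-T)).mono_left nhdsWithin_le_nhds).congr' ?_
        filter_upwards [self_mem_nhdsWithin] with u hu
        exact (hFeq u hu).symm
      rw [← h1]
      exact tendsto_nhds_unique hF hFY
    · rcases eq_or_lt_of_le ht.2 with h2 | h2
      · -- t = T
        have hne : (nhdsWithin (T : ℝ) (Ioo (-T) T)).NeBot := by
          rw [← mem_closure_iff_nhdsWithin_neBot, closure_Ioo (by linarith : (-T:ℝ) ≠ T)]
          exact ⟨by linarith, le_refl _⟩
        have hF : Tendsto F (nhdsWithin T (Ioo (-T) T)) (nhds (F T)) :=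
          (hFc.continuousWithinAt (right_mem_Icc.mpr (by linarith))).mono_left
            (nhdsWithin_mono _ Ioo_subset_Icc_self)
        have hFY : Tendsto F (nhdsWithin T (Ioo (-T) T)) (nhds (FY T)) := by
          refine ((hFYc.tendsto T).mono_left nhdsWithin_le_nhds).congr' ?_
          filter_upwards [self_mem_nhdsWithin] with u hu
          exact (hFeq u hu).symm
        rw [h2]
        exact tendsto_nhds_unique hF hFY
      · exact hFeq t ⟨h1, h2⟩
  have hYcont : Continuous Y := by
    have := continuous_Cc (m := m) hm
    have := continuous_Ss (m := m) hm
    simp only [hY]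
    fun_prop
  have hYdcont : Continuous Yd := by
    have := continuous_Cc (m := m) hm
    have := continuous_Ss (m := m) hm
    simp only [hYd]
    fun_prop
  have hdY_Icc : ∀ t ∈ Icc (-T) T, d t = Y t := hextend d Y hdc hYcont hdY
  have hφY_Icc : ∀ t ∈ Icc (-T) T, φ t = Yd t := hextend φ Yd hφc hYdcont hφY
  have hTmem : (T : ℝ) ∈ Icc (-T) T := right_mem_Icc.mpr (by linarith)
  have hmTmem : (-T : ℝ) ∈ Icc (-T) T := left_mem_Icc.mpr (by linarith)
  -- periodicity of Y
  have hYper : Y T = Y (-T) := by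
    rw [← hdY_Icc T hTmem, ← hdY_Icc (-T) hmTmem]
    exact hper.symm
  have hYdper : Yd T = Yd (-T) := by
    rw [← hφY_Icc T hTmem, ← hφY_Icc (-T) hmTmem]
    simp only [hφ, neg_neg]
    rw [hper]
  have hY0 := nonres hm hSsT hYderiv hYdderiv hYper hYdper
  intro t ht
  rw [hdY_Icc t ht, hY0 t]

end Homog


lemma m_ne_and_Ss_ne {T m : ℝ} (hT : 0 < T)
    (hnr : ∀ n : ℕ, m ≠ ((n : ℝ) * Real.pi / T)^2) : m ≠ 0 ∧ Ss m T ≠ 0 := by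
  have hm : m ≠ 0 := by
    have := hnr 0
    simpa using this
  refine ⟨hm, ?_⟩
  rcases lt_or_gt_of_ne hm with hneg | hpos
  · have h1 : 0 < -m := by linarith
    have hform : Ss m T = Real.sinh (Real.sqrt (-m) * T) / Real.sqrt (-m) := by
      simp [Ss, hneg.not_gt]
    rw [hform]
    have hs : 0 < Real.sqrt (-m) := Real.sqrt_pos.mpr h1
    have hsinh : Real.sinh (Real.sqrt (-m) * T) ≠ 0 := by
      rw [Real.sinh_ne_zero]
      exact ne_of_gt (mul_pos hs hT)
    exact div_ne_zero hsinh (ne_of_gt hs)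
  · have hs : 0 < Real.sqrt m := Real.sqrt_pos.mpr hpos
    have hform : Ss m T = Real.sin (Real.sqrt m * T) / Real.sqrt m := by simp [Ss, hpos]
    rw [hform]
    apply div_ne_zero _ (ne_of_gt hs)
    intro hsin
    obtain ⟨n, hn⟩ := Real.sin_eq_zero_iff.mp hsin
    have hpos' : (0:ℝ) < Real.sqrt m * T := mul_pos hs hT
    have hnpos : 0 < n := by
      by_contra hle
      push_neg at hle
      have hn0 : (n:ℝ) ≤ 0 := by exact_mod_cast hle
      nlinarith [Real.pi_pos]
    apply hnr n.toNat
    have hcast : ((n.toNat : ℕ) : ℝ) = (n : ℝ) := by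
      have := Int.toNat_of_nonneg hnpos.le
      exact_mod_cast congrArg (fun z : ℤ => (z : ℝ)) this
    rw [hcast]
    have hsq : Real.sqrt m = (n:ℝ) * Real.pi / T := by
      field_simp
      linarith
    rw [← hsq, sq]
    exact (Real.mul_self_sqrt hpos.le).symm

end S8

open Set MeasureTheory intervalIntegral Filter

/-- `x` is a Carathéodory solution of `x'(t) + a x(-t) + b x(t) = h(t)` on `[-T,T]`
with `x(-T) = x(T)`. -/
def IsSolBVP (T a b : ℝ) (h x : ℝ → ℝ) : Prop :=
  (∃ g : ℝ → ℝ, IntegrableOn g (Icc (-T) T) ∧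
    (∀ t ∈ Icc (-T) T, x t = x (-T) + ∫ s in (-T)..t, g s) ∧
    (∀ᵐ t ∂(volume.restrict (Icc (-T) T)), g t + a * x (-t) + b * x t = h t)) ∧
  x (-T) = x T

/-- If `a² - b² ≠ (nπ/T)²` for every `n = 0,1,2,…` and `G` is the Green's function of the
second-order periodic problem `x'' + (a² - b²) x = 0`, `x(T) = x(-T)`, `x'(T) = x'(-T)`
(with `Gt = ∂G/∂t` and one-sided limits `p`, `q` of `Gt` across the diagonal), then
`u(t) = ∫_{-T}^{T} (a G(t,-s) - b G(t,s) + ∂G/∂t(t,s)) h(s) ds` is the unique solution of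
`x' + a x(-·) + b x = h`, `x(-T) = x(T)`. -/
theorem stmt8 (T a b : ℝ) (hT : 0 < T)
    (hnr : ∀ n : ℕ, a^2 - b^2 ≠ (n * Real.pi / T)^2)
    (h : ℝ → ℝ) (hh : IntegrableOn h (Icc (-T) T))
    (G Gt : ℝ → ℝ → ℝ) (p q : ℝ → ℝ)
    (hGcont : ContinuousOn (fun z : ℝ × ℝ => G z.1 z.2) (Icc (-T) T ×ˢ Icc (-T) T))
    (hGt : ∀ s ∈ Icc (-T) T, ∀ t ∈ Icc (-T) T, t ≠ s →
      HasDerivAt (fun u => G u s) (Gt t s) t)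
    (hGtt : ∀ s ∈ Icc (-T) T, ∀ t ∈ Icc (-T) T, t ≠ s →
      HasDerivAt (fun u => Gt u s) (-(a^2 - b^2) * G t s) t)
    (hjump : ∀ t ∈ Ioo (-T) T,
      Tendsto (fun s => Gt t s) (nhdsWithin t (Iio t)) (nhds (p t)) ∧
      Tendsto (fun s => Gt t s) (nhdsWithin t (Ioi t)) (nhds (q t)) ∧
      p t - q t = 1)
    (hbc1 : ∀ s ∈ Icc (-T) T, G T s = G (-T) s)
    (hbc2 : ∀ s ∈ Ioo (-T) T, Gt T s = Gt (-T) s) :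
    IsSolBVP T a b h (fun t => ∫ s in (-T)..T, (a * G t (-s) - b * G t s + Gt t s) * h s) ∧
    ∀ x : ℝ → ℝ, IsSolBVP T a b h x →
      EqOn x (fun t => ∫ s in (-T)..T, (a * G t (-s) - b * G t s + Gt t s) * h s)
        (Icc (-T) T) := by
  classical
  set m : ℝ := a^2 - b^2 with hmdef
  obtain ⟨hm, hSsT⟩ := S8.m_ne_and_Ss_ne hT hnr
  -- measurable representative of h
  have hmk := hh.aestronglyMeasurable
  set h' : ℝ → ℝ := hmk.mk h with hh'def
  have hh'm : Measurable h' := hmk.stronglyMeasurable_mk.measurable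
  have hheq : h =ᵐ[volume.restrict (Icc (-T) T)] h' := hmk.ae_eq_mk
  have hh'i : IntegrableOn h' (Icc (-T) T) := hh.congr hheq
  have hheq' : ∀ᵐ σ ∂volume, σ ∈ Icc (-T) T → h σ = h' σ :=
    (ae_restrict_iff' measurableSet_Icc).mp hheq
  -- pin down G and Gt
  have hGpsi : ∀ s ∈ Ioo (-T) T, ∀ t ∈ Icc (-T) T, G t s = S8.psi T m |t - s| :=
    S8.key2 hT hm hSsT hGcont hGt hGtt hjump hbc1 hbc2
  have hGtpsi : ∀ s ∈ Ioo (-T) T, ∀ t ∈ Icc (-T) T, t ≠ s → Gt t s = S8.Wf T m (t - s) :=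
    fun s hs t ht hts => S8.keyGt hT hm hGt hGpsi hs ht hts
  set U : ℝ → ℝ := S8.u0 T m a b h' with hUdef
  set uu : ℝ → ℝ := fun t => ∫ s in (-T)..T, (a * G t (-s) - b * G t s + Gt t s) * h s
    with huudef
  have hTT : (-T : ℝ) ≤ T := by linarith
  have hTmem : (T : ℝ) ∈ Icc (-T) T := right_mem_Icc.mpr hTT
  have hmTmem : (-T : ℝ) ∈ Icc (-T) T := left_mem_Icc.mpr hTT
  -- the bridge: uu = U on Icc
  have hbridge : ∀ t ∈ Icc (-T) T, uu t = U t := by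
    intro t ht
    show (∫ s in (-T)..T, (a * G t (-s) - b * G t s + Gt t s) * h s) = U t
    rw [intervalIntegral.integral_of_le hTT]
    apply MeasureTheory.integral_congr_ae
    have hhIoc : ∀ᵐ s ∂(volume.restrict (Ioc (-T) T)), h s = h' s :=
      ae_restrict_of_ae_restrict_of_subset Ioc_subset_Icc_self hheq
    filter_upwards [ae_restrict_mem measurableSet_Ioc,
      ae_restrict_of_ae (S8.ae_ne_vol T), ae_restrict_of_ae (S8.ae_ne_vol t), hhIoc]
      with s h1 h2 h3 h5
    have hsIoo : s ∈ Ioo (-T) T := ⟨h1.1, lt_of_le_of_ne h1.2 h2⟩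
    have hnsIoo : -s ∈ Ioo (-T) T := ⟨by linarith [hsIoo.2], by linarith [hsIoo.1]⟩
    have e1 : G t (-s) = S8.psi T m |t + s| := by
      have := hGpsi (-s) hnsIoo t ht
      rwa [sub_neg_eq_add] at this
    have e2 : G t s = S8.psi T m |t - s| := hGpsi s hsIoo t ht
    have e3 : Gt t s = S8.Wf T m (t - s) := hGtpsi s hsIoo t ht (Ne.symm h3)
    rw [e1, e2, e3, h5]
    rfl
  -- data for the existence part
  set g : ℝ → ℝ := fun σ => h σ - a * uu (-σ) - b * uu σ with hgdef
  have hUc : ContinuousOn U (Icc (-T) T) := S8.u0_continuousOn hm hT hh'i hh'm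
  have hmaps : MapsTo (fun σ : ℝ => -σ) (Icc (-T) T) (Icc (-T) T) := by
    intro x hx
    constructor
    · show -T ≤ -x; linarith [hx.2]
    · show -x ≤ T; linarith [hx.1]
  have hXc : ContinuousOn (fun σ => a * U (-σ) + b * U σ) (Icc (-T) T) := by
    apply ContinuousOn.add
    · exact (hUc.comp continuous_neg.continuousOn hmaps).const_smul a
    · exact hUc.const_smul b
  have hXeq : EqOn (fun σ => a * U (-σ) + b * U σ) (fun σ => a * uu (-σ) + b * uu σ)
      (Icc (-T) T) := by
    intro σ hσ
    have h1 := hbridge (-σ) (hmaps hσ)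
    have h2 := hbridge σ hσ
    simp only
    rw [h1, h2]
  have hXint : IntegrableOn (fun σ => a * uu (-σ) + b * uu σ) (Icc (-T) T) :=
    (hXc.integrableOn_Icc).congr_fun hXeq measurableSet_Icc
  have hgint : IntegrableOn g (Icc (-T) T) := by
    have : g = fun σ => h σ - (a * uu (-σ) + b * uu σ) := by funext σ; rw [hgdef]; ring
    rw [this]
    exact hh.sub hXint
  -- the integral representation for uu
  have hgcongr : ∀ t ∈ Icc (-T) T,
      (∫ σ in (-T)..t, g σ) = ∫ σ in (-T)..t, (h' σ - a * U (-σ) - b * U σ) := by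
    intro t ht
    apply intervalIntegral.integral_congr_ae
    filter_upwards [hheq'] with σ hσ hmem
    rw [uIoc_of_le ht.1] at hmem
    have hσIcc : σ ∈ Icc (-T) T := ⟨hmem.1.le, le_trans hmem.2 ht.2⟩
    have e1 := hbridge (-σ) (hmaps hσIcc)
    have e2 := hbridge σ hσIcc
    rw [hgdef]
    simp only
    rw [e1, e2, hσ hσIcc]
  have hrep : ∀ t ∈ Icc (-T) T, uu t = uu (-T) + ∫ σ in (-T)..t, g σ := by
    intro t ht
    rw [hbridge t ht, hbridge (-T) hmTmem, hgcongr t ht]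
    exact S8.u0_main hT hm hSsT hmdef hh'i hh'm ht
  have hper : uu (-T) = uu T := by
    rw [hbridge T hTmem, hbridge (-T) hmTmem]
    exact (S8.u0_bc hm hSsT).symm
  have hsol : IsSolBVP T a b h uu := by
    refine ⟨⟨g, hgint, hrep, ?_⟩, hper⟩
    apply ae_of_all
    intro t
    rw [hgdef]
    ring
  constructor
  · exact hsol
  · -- uniqueness
    intro x hx
    obtain ⟨⟨gx, hgxint, hgxrep, hgxae⟩, hxper⟩ := hx
    set d : ℝ → ℝ := fun t => x t - uu t with hddef
    set gd : ℝ → ℝ := fun t => gx t - g t with hgddef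
    have hgdint : IntegrableOn gd (Icc (-T) T) := hgxint.sub hgint
    have hdrep : ∀ t ∈ Icc (-T) T, d t = d (-T) + ∫ σ in (-T)..t, gd σ := by
      intro t ht
      have hsub : uIcc (-T) t ⊆ Icc (-T) T := by
        rw [uIcc_of_le ht.1]
        exact fun y hy => ⟨hy.1, le_trans hy.2 ht.2⟩
      have hii1 : IntervalIntegrable gx volume (-T) t :=
        (hgxint.mono_set hsub).intervalIntegrable
      have hii2 : IntervalIntegrable g volume (-T) t :=
        (hgint.mono_set hsub).intervalIntegrable
      have := intervalIntegral.integral_sub hii1 hii2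
      rw [hddef, hgddef]
      simp only
      rw [this, hgxrep t ht, hrep t ht]
      ring
    have hdae : ∀ᵐ σ ∂(volume.restrict (Icc (-T) T)), gd σ = -a * d (-σ) - b * d σ := by
      filter_upwards [hgxae] with σ hσ
      rw [hgddef, hddef, hgdef]
      simp only
      have : gx σ = h σ - a * x (-σ) - b * x σ := by linarith [hσ]
      rw [this]
      ring
    have hdper : d (-T) = d T := by
      rw [hddef]
      simp only
      rw [hxper, hper]
    have hd0 := S8.homog_zero hT hm hSsT hmdef hgdint hdrep hdae hdper
    intro t ht
    have := hd0 t ht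
    rw [hddef] at this
    simp only at this
    show x t = uu t
    linarith [this]
end

section
/- Let ν ∈ L¹([-T,T]) with ∫₋ₜᵀ ν ≠ 0, and let G₃ be the Green's function G₃(t,s) = τ e^{∫ₜˢ ν} (s ≤ t), (τ-1) e^{∫ₜˢ ν} (s > t), where τ = 1/(1 - e^{-∫₋ₜᵀ ν}). Then |G₃(t,s)| ≤ e^{‖ν‖₁} / |e^{‖ν⁺‖₁} - e^{‖ν⁻‖₁}| for all t, s ∈ [-T,T], where ν⁺ and ν⁻ are the positive and negative parts of ν. -/
open Set MeasureTheory intervalIntegral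

/-- The Green's function `G₃` of `x' + ν x = h`, `x(-T) = x(T)`. -/
noncomputable def G3 (T : ℝ) (ν : ℝ → ℝ) (t s : ℝ) : ℝ :=
  if s ≤ t then
    (1 / (1 - Real.exp (-∫ r in (-T)..T, ν r))) * Real.exp (∫ r in t..s, ν r)
  else
    (1 / (1 - Real.exp (-∫ r in (-T)..T, ν r)) - 1) * Real.exp (∫ r in t..s, ν r)

lemma aux_int (T : ℝ) (f : ℝ → ℝ) (hf : IntegrableOn f (Icc (-T) T))
    {a b : ℝ} (hab : a ≤ b) (ha : a ∈ Icc (-T) T) (hb : b ∈ Icc (-T) T) :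
    (∫ r in a..b, f r) ≤ ∫ r in Icc (-T) T, max (f r) 0 := by
  have hsub : Icc a b ⊆ Icc (-T) T := Icc_subset_Icc ha.1 hb.2
  have hint : IntervalIntegrable f volume a b := by
    rw [intervalIntegrable_iff_integrableOn_Icc_of_le hab]
    exact hf.mono_set hsub
  have hint2 : IntervalIntegrable (fun r => max (f r) 0) volume a b := by
    rw [intervalIntegrable_iff_integrableOn_Icc_of_le hab]
    exact (hf.mono_set hsub).pos_part
  calc (∫ r in a..b, f r) ≤ ∫ r in a..b, max (f r) 0 :=
        intervalIntegral.integral_mono_on hab hint hint2 (fun x _ => le_max_left _ _)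
    _ = ∫ r in Ioc a b, max (f r) 0 := intervalIntegral.integral_of_le hab
    _ ≤ ∫ r in Icc (-T) T, max (f r) 0 := by
        apply setIntegral_mono_set hf.pos_part
        · exact Filter.Eventually.of_forall fun x => le_max_right _ 0
        · exact (Ioc_subset_Icc_self.trans hsub).eventuallyLE

/-- Bound for the Green's function:
`|G₃(t,s)| ≤ e^{‖ν‖₁} / |e^{‖ν⁺‖₁} - e^{‖ν⁻‖₁}|`. -/
theorem stmt10 (T : ℝ) (hT : 0 < T) (ν : ℝ → ℝ)
    (hν : IntegrableOn ν (Icc (-T) T))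
    (hint : (∫ t in (-T)..T, ν t) ≠ 0) :
    ∀ t ∈ Icc (-T) T, ∀ s ∈ Icc (-T) T,
      |G3 T ν t s| ≤
        Real.exp (∫ r in Icc (-T) T, |ν r|) /
          |Real.exp (∫ r in Icc (-T) T, max (ν r) 0) -
            Real.exp (∫ r in Icc (-T) T, max (-ν r) 0)| := by
  intro t ht s hs
  set P := ∫ r in Icc (-T) T, max (ν r) 0 with hPdef
  set N := ∫ r in Icc (-T) T, max (-ν r) 0 with hNdef
  have hνp : IntegrableOn (fun r => max (ν r) 0) (Icc (-T) T) := hν.pos_part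
  have hνn : IntegrableOn (fun r => max (-ν r) 0) (Icc (-T) T) := hν.neg.pos_part
  have hL : (∫ r in Icc (-T) T, |ν r|) = P + N := by
    rw [hPdef, hNdef, ← integral_add hνp hνn]
    apply setIntegral_congr_fun measurableSet_Icc
    intro x _
    rcases le_total (ν x) 0 with h | h
    · simp [abs_of_nonpos h, max_eq_right h, max_eq_left (neg_nonneg.2 h)]
    · simp [abs_of_nonneg h, max_eq_left h, max_eq_right (neg_nonpos.2 h)]
  have hA : (∫ r in (-T)..T, ν r) = P - N := by
    rw [intervalIntegral.integral_of_le (by linarith : -T ≤ T),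
      ← integral_Icc_eq_integral_Ioc, hPdef, hNdef, ← integral_sub hνp hνn]
    apply setIntegral_congr_fun measurableSet_Icc
    intro x _
    rcases le_total (ν x) 0 with h | h
    · simp [max_eq_right h, max_eq_left (neg_nonneg.2 h)]
    · simp [max_eq_left h, max_eq_right (neg_nonpos.2 h)]
  have hPN : P ≠ N := fun h => hint (by rw [hA, h, sub_self])
  have hD : Real.exp P - Real.exp N ≠ 0 :=
    sub_ne_zero.2 fun h => hPN (Real.exp_injective h)
  have hkey : 1 - Real.exp (-∫ r in (-T)..T, ν r) =
      Real.exp (-P) * (Real.exp P - Real.exp N) := by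
    rw [hA, show -(P - N) = N - P by ring, Real.exp_sub, Real.exp_neg]
    field_simp
  have hτ : 1 / (1 - Real.exp (-∫ r in (-T)..T, ν r)) =
      Real.exp P / (Real.exp P - Real.exp N) := by
    rw [hkey, Real.exp_neg]
    field_simp
  have hDpos : 0 < |Real.exp P - Real.exp N| := abs_pos.2 hD
  by_cases hst : s ≤ t
  · have hI : (∫ r in t..s, ν r) ≤ N := by
      have := aux_int T (fun r => -ν r) hν.neg hst hs ht
      rwa [intervalIntegral.integral_neg, intervalIntegral.integral_symm,
        neg_neg] at this
    rw [G3, if_pos hst, hτ, hL, abs_mul, abs_div, Real.abs_exp, Real.abs_exp,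
      Real.exp_add, div_mul_eq_mul_div]
    gcongr
  · have hI : (∫ r in t..s, ν r) ≤ P :=
      aux_int T ν hν (le_of_not_ge hst) ht hs
    have hτ1 : 1 / (1 - Real.exp (-∫ r in (-T)..T, ν r)) - 1 =
        Real.exp N / (Real.exp P - Real.exp N) := by
      rw [hτ]
      field_simp
      ring
    rw [G3, if_neg hst, hτ1, hL, abs_mul, abs_div, Real.abs_exp, Real.abs_exp,
      add_comm P N, Real.exp_add, div_mul_eq_mul_div]
    gcongr
end
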